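/- arXiv:2409.11892 — 5 statements merged into one kernel-verified Lean document; each statement's English description precedes it below -/
import Mathlib

section
/- Let S/R be a Frobenius extension of two-sided Noetherian rings with the R-R-bimodule S centrally projective over R. If ω is a finitely generated R-module with fadim_R(ω) ≥ n+2 and Ext^i_R(ω,ω)=0 for 1 ≤ i ≤ n, then fadim_S(S ⊗_R ω) ≥ n+2. -/
/-!
Put `Coind M = Hom_R(S, M)`. A Frobenius system `(E, x, y)` identifies `Coind M` with `S ⊗_R M`
through `s ⊗ v ↦ (s' ↦ E (s' * s) • v)`, so `Coind` is exact and left adjoint to restriction of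
scalars, and it turns `add ω` into `add (Coind ω)`. Central projectivity puts the restriction of
`Coind ω` to `R` into `add ω`, hence the adjunction carries left `add ω`-approximations to left
`add (Coind ω)`-approximations. Applying `Coind` to an approximation sequence of `R` therefore gives
one of `Coind R ≅ S`, and `Coind ω ≅ S ⊗_R ω`.
-/
open CategoryTheory

noncomputable section

/-- `Ext^n_A(M, N) = 0`, via Mathlib's `Ext` for the `ℤ`-linear abelian
category of left `A`-modules. -/
def ExtVanish (A : Type) [Ring A] (n : ℕ) (M N : Type) [AddCommGroup M] [Module A M]
    [AddCommGroup N] [Module A N] : Prop :=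
  Subsingleton (((Ext ℤ (ModuleCat.{0} A) n).obj (Opposite.op (ModuleCat.of A M))).obj
    (ModuleCat.of A N))

/-- `X` belongs to `add ω`: `X` is a direct summand of a finite direct sum of
copies of `ω`. -/
def MemAdd (A : Type) [Ring A] (ω : Type) [AddCommGroup ω] [Module A ω]
    (X : Type) [AddCommGroup X] [Module A X] : Prop :=
  ∃ (n : ℕ) (i : X →ₗ[A] (Fin n → ω)) (p : (Fin n → ω) →ₗ[A] X), ∀ x, p (i x) = x

/-- `f : M → X` is a left `add ω`-approximation of `M`: every map from `M` to a module
in `add ω` factors through `f`. -/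
def IsLeftApprox (A : Type) [Ring A] (ω : Type) [AddCommGroup ω] [Module A ω]
    {M X : Type} [AddCommGroup M] [Module A M] [AddCommGroup X] [Module A X]
    (f : M →ₗ[A] X) : Prop :=
  ∀ (Z : Type) [AddCommGroup Z] [Module A Z], MemAdd A ω Z →
    ∀ g : M →ₗ[A] Z, ∃ h : X →ₗ[A] Z, h.comp f = g

/-- There is an exact sequence `0 → M → ω₁ → ⋯ → ωₙ` with each `ωᵢ ∈ add ω` and each
`Im fᵢ ↪ ωᵢ` a left `add ω`-approximation.  Applied to `M = A` this says
`fadim_A ω ≥ n`; by Huang's theorem, applied to a module `M` it says exactly that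
`M` is `ω`-`n`-torsionfree. -/
def ApproxChain (A : Type) [Ring A] (ω : Type) [AddCommGroup ω] [Module A ω] :
    ℕ → ModuleCat.{0} A → Prop
  | 0, _ => True
  | n + 1, M =>
    ∃ (X : ModuleCat.{0} A) (f : M →ₗ[A] X), MemAdd A ω X ∧ Function.Injective f ∧
      IsLeftApprox A ω f ∧ ApproxChain A ω n (ModuleCat.of A (X ⧸ LinearMap.range f))

/-- A ring extension `l : R → S` is a Frobenius extension; this is encoded by the
classical equivalent data of a Frobenius system: an `R`-`R`-bimodule map `E : S → R`
together with dual bases `x₁,…,xₘ, y₁,…,yₘ ∈ S`.  This is equivalent to: `_R S` is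
finitely generated projective and `_S S_R ≅ Hom_R(_R S_S, _R R_R)` as `S`-`R`-bimodules. -/
def IsFrobeniusExtension {R S : Type} [Ring R] [Ring S] (l : R →+* S) : Prop :=
  ∃ (E : S →+ R) (m : ℕ) (x y : Fin m → S),
    (∀ r s, E (l r * s) = r * E s) ∧ (∀ s r, E (s * l r) = E s * r) ∧
    (∀ s, (∑ i, x i * l (E (y i * s))) = s) ∧
    (∀ s, (∑ i, l (E (s * x i)) * y i) = s)

/-- The `R`-`R`-bimodule `S` (via `l`) is centrally projective over `R`, i.e. `_R S_R`
is a direct summand of a finite direct sum of copies of the regular bimodule `_R R_R`. -/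
def IsCentrallyProjective {R S : Type} [Ring R] [Ring S] (l : R →+* S) : Prop :=
  ∃ (n : ℕ) (i : S →+ (Fin n → R)) (p : (Fin n → R) →+ S),
    (∀ r s, i (l r * s) = fun j => r * i s j) ∧
    (∀ s r, i (s * l r) = fun j => i s j * r) ∧
    (∀ r v, p (fun j => r * v j) = l r * p v) ∧
    (∀ v r, p (fun j => v j * r) = p v * l r) ∧
    (∀ s, p (i s) = s)

/-- `(W, t)` realizes the induced module `S ⊗_R M` of the `R`-module `M` along
`l : R → S`: `t s m = s ⊗ m` is additive in each variable, `R`-balanced and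
`S`-equivariant, and satisfies the universal property among `S`-modules. -/
def IsInducedTensor {R S : Type} [Ring R] [Ring S] (l : R →+* S)
    (M : Type) [AddCommGroup M] [Module R M]
    (W : Type) [AddCommGroup W] [Module S W] (t : S →+ M →+ W) : Prop :=
  (∀ s r m, t (s * l r) m = t s (r • m)) ∧
  (∀ s' s m, t (s' * s) m = s' • t s m) ∧
  (∀ (V : Type) [AddCommGroup V] [Module S V] (b : S →+ M →+ V),
    (∀ s r m, b (s * l r) m = b s (r • m)) → (∀ s' s m, b (s' * s) m = s' • b s m) →
    ∃! h : W →ₗ[S] V, ∀ s m, h (t s m) = b s m)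

section MemAdd

variable {A : Type} [Ring A] {ω ω' X Y Z : Type} [AddCommGroup ω] [Module A ω]
  [AddCommGroup ω'] [Module A ω'] [AddCommGroup X] [Module A X] [AddCommGroup Y] [Module A Y]
  [AddCommGroup Z] [Module A Z]

theorem MemAdd.self : MemAdd A ω ω :=
  ⟨1, (LinearEquiv.funUnique (Fin 1) A ω).symm.toLinearMap,
    (LinearEquiv.funUnique (Fin 1) A ω).toLinearMap, fun _ => by simp⟩

theorem MemAdd.of_retract (i : Z →ₗ[A] Y) (p : Y →ₗ[A] Z) (hpi : ∀ z, p (i z) = z)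
    (h : MemAdd A ω Y) : MemAdd A ω Z := by
  obtain ⟨n, i', p', hpi'⟩ := h
  exact ⟨n, i' ∘ₗ i, p ∘ₗ p', fun z => by simp [hpi', hpi]⟩

theorem MemAdd.pi (k : ℕ) (h : MemAdd A ω X) : MemAdd A ω (Fin k → X) := by
  obtain ⟨a, i, p, hpi⟩ := h
  let e : (Fin k → Fin a → ω) ≃ₗ[A] (Fin (k * a) → ω) :=
    (LinearEquiv.curry A ω (Fin k) (Fin a)).symm ≪≫ₗ
      LinearEquiv.funCongrLeft A ω finProdFinEquiv.symm
  refine MemAdd.of_retract (i.compLeft (Fin k)) (p.compLeft (Fin k))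
    (fun v => funext fun j => hpi (v j)) ⟨k * a, e.toLinearMap, e.symm.toLinearMap, ?_⟩
  simp

theorem MemAdd.trans (h₁ : MemAdd A ω X) (h₂ : MemAdd A X Z) : MemAdd A ω Z := by
  obtain ⟨k, i, p, hpi⟩ := h₂
  exact (h₁.pi k).of_retract i p hpi

theorem MemAdd.of_linearEquiv (e : ω ≃ₗ[A] ω') (h : MemAdd A ω Z) : MemAdd A ω' Z :=
  (MemAdd.self.of_retract e.toLinearMap e.symm.toLinearMap e.symm_apply_apply).trans h

theorem MemAdd.restrictScalars {B : Type} [Ring B] (l : B →+* A) [Module B ω] [Module B Z]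
    (hω : ∀ (b : B) (v : ω), b • v = l b • v) (hZ : ∀ (b : B) (z : Z), b • z = l b • z)
    (h : MemAdd A ω Z) : MemAdd B ω Z := by
  obtain ⟨n, i, p, hpi⟩ := h
  refine ⟨n, { i.toAddMonoidHom with map_smul' := fun b z => ?_ },
    { p.toAddMonoidHom with map_smul' := fun b v => ?_ }, hpi⟩
  · ext j
    simp [hZ, hω]
  · have hv : b • v = l b • v := funext fun j => hω b (v j)
    simp [hZ, hv]

end MemAdd

section ApproxChain

variable {A : Type} [Ring A] {ω ω' : Type} [AddCommGroup ω] [Module A ω]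
  [AddCommGroup ω'] [Module A ω']

theorem ApproxChain.of_linearEquiv {k : ℕ} {M₁ M₂ : ModuleCat.{0} A} (e : M₁ ≃ₗ[A] M₂)
    (h : ApproxChain A ω k M₂) : ApproxChain A ω k M₁ := by
  induction k generalizing M₁ M₂ with
  | zero => trivial
  | succ k ih =>
    obtain ⟨X, f, hX, hf, happrox, hchain⟩ := h
    refine ⟨X, f ∘ₗ e.toLinearMap, hX, hf.comp e.injective, fun Z _ _ hZ g => ?_, ?_⟩
    · obtain ⟨h, hh⟩ := happrox Z hZ (g ∘ₗ e.symm.toLinearMap)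
      exact ⟨h, by rw [← LinearMap.comp_assoc, hh, LinearMap.comp_assoc, e.symm_comp,
        LinearMap.comp_id]⟩
    · rwa [LinearMap.range_comp, LinearEquiv.range, Submodule.map_top]

theorem ApproxChain.of_generator_linearEquiv (e : ω ≃ₗ[A] ω') {k : ℕ} {M : ModuleCat.{0} A}
    (h : ApproxChain A ω k M) : ApproxChain A ω' k M := by
  induction k generalizing M with
  | zero => trivial
  | succ k ih =>
    obtain ⟨X, f, hX, hf, happrox, hchain⟩ := h
    exact ⟨X, f, hX.of_linearEquiv e, hf,
      fun Z _ _ hZ g => happrox Z (hZ.of_linearEquiv e.symm) g, ih hchain⟩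

end ApproxChain

/-- `Hom_R(S, M)` for `S` viewed as a left `R`-module through `l`: this is the carrier of
`(ModuleCat.coextendScalars l).obj (ModuleCat.of R M)`, restated so that its elements are applied
to terms of type `S` itself. -/
abbrev Coind {R S : Type} [Ring R] [Ring S] (l : R →+* S) (M : Type) [AddCommGroup M]
    [Module R M] : Type :=
  letI := Module.compHom S l
  S →ₗ[R] M

instance {R S : Type} [Ring R] [Ring S] (l : R →+* S) (M : Type) [AddCommGroup M] [Module R M] :
    Module S (Coind l M) :=
  inferInstanceAs (Module S ((ModuleCat.restrictScalars l).obj (ModuleCat.of S S) →ₗ[R] M))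

namespace Coind

variable {R S : Type} [Ring R] [Ring S] {l : R →+* S} {M N : Type} [AddCommGroup M] [Module R M]
  [AddCommGroup N] [Module R N]

theorem map_mul_left (f : Coind l M) (r : R) (s : S) : f (l r * s) = r • f s :=
  letI := Module.compHom S l
  f.map_smul r s

def mk (f : S →+ M) (hf : ∀ (r : R) (s : S), f (l r * s) = r • f s) : Coind l M :=
  letI := Module.compHom S l
  { f with map_smul' := hf }

@[simp]
theorem mk_apply (f : S →+ M) (hf : ∀ (r : R) (s : S), f (l r * s) = r • f s) (s : S) :
    mk f hf s = f s := rfl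

@[ext]
theorem ext {f g : Coind l M} (h : ∀ s : S, f s = g s) : f = g :=
  letI := Module.compHom S l
  LinearMap.ext h

@[simp]
theorem smul_apply (s : S) (f : Coind l M) (s' : S) : (s • f) s' = f (s' * s) := rfl

@[simp]
theorem sum_apply {ι : Type} (u : Finset ι) (f : ι → Coind l M) (s : S) :
    (∑ i ∈ u, f i) s = ∑ i ∈ u, f i s :=
  letI := Module.compHom S l
  LinearMap.sum_apply u f s

variable (l) in
def map (g : M →ₗ[R] N) : Coind l M →ₗ[S] Coind l N :=
  letI := Module.compHom S l
  { toFun f := g ∘ₗ f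
    map_add' f f' := LinearMap.comp_add f f' g
    map_smul' _ _ := rfl }

@[simp]
theorem map_apply (g : M →ₗ[R] N) (f : Coind l M) (s : S) : map l g f s = g (f s) := rfl

theorem map_injective {g : M →ₗ[R] N} (hg : Function.Injective g) :
    Function.Injective (map l g) :=
  fun _ _ h => ext fun s => hg (congrArg (· s) h)

variable (l) in
def piEquiv (ι : Type) : Coind l (ι → M) ≃ₗ[S] (ι → Coind l M) :=
  letI := Module.compHom S l
  { toFun f i := map l (LinearMap.proj i) f
    invFun v := LinearMap.pi v
    map_add' _ _ := rfl
    map_smul' _ _ := rfl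
    left_inv _ := rfl
    right_inv _ := rfl }

end Coind

theorem MemAdd.coind {R S : Type} [Ring R] [Ring S] (l : R →+* S) {ω X : Type} [AddCommGroup ω]
    [Module R ω] [AddCommGroup X] [Module R X] (h : MemAdd R ω X) :
    MemAdd S (Coind l ω) (Coind l X) := by
  obtain ⟨k, i, p, hpi⟩ := h
  refine ⟨k, (Coind.piEquiv l (Fin k)).toLinearMap ∘ₗ Coind.map l i,
    Coind.map l p ∘ₗ (Coind.piEquiv l (Fin k)).symm.toLinearMap, fun f => ?_⟩
  ext s
  simp [hpi]

namespace IsCentrallyProjective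

variable {R S : Type} [Ring R] [Ring S] {l : R →+* S} {M : Type} [AddCommGroup M] [Module R M]

/-- Restricted to `R` through the right `R`-action on `S`, `Hom_R(S, M)` is a direct summand of
`Hom_R(R^N, M) = M^N`, because `_R S_R` is a bimodule summand of `R^N`. -/
theorem memAdd_coind (hCP : IsCentrallyProjective l) [Module R (Coind l M)]
    (hC : ∀ (r : R) (f : Coind l M), r • f = l r • f) : MemAdd R M (Coind l M) := by
  obtain ⟨N, i, p, hi_left, hi_right, hp_left, hp_right, hpi⟩ := hCP
  have mul_single (j : Fin N) (r : R) :
      (fun j' => r * (Pi.single j 1 : Fin N → R) j') = Pi.single j r := by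
    ext j'
    by_cases h : j' = j <;> simp [h]
  have single_mul (j : Fin N) (r : R) :
      (fun j' => (Pi.single j 1 : Fin N → R) j' * r) = Pi.single j r := by
    ext j'
    by_cases h : j' = j <;> simp [h]
  refine ⟨N,
    { toFun f j := f (p (Pi.single j 1))
      map_add' _ _ := rfl
      map_smul' r f := funext fun j => ?_ },
    { toFun v := Coind.mk
        { toFun s := ∑ j, i s j • v j
          map_zero' := by simp
          map_add' s s' := by simp [add_smul, Finset.sum_add_distrib] }
        fun r s => by simp [hi_left, Finset.smul_sum, mul_smul]
      map_add' v w := Coind.ext fun s => by simp [Finset.sum_add_distrib]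
      map_smul' r v := by
        rw [hC]
        ext s
        simp [hi_right, mul_smul] },
    fun f => Coind.ext fun s => ?_⟩
  · simp only [RingHom.id_apply, Pi.smul_apply, hC, Coind.smul_apply]
    rw [← hp_right, single_mul, ← mul_single, hp_left, Coind.map_mul_left]
  · change ∑ j, i s j • f (p (Pi.single j 1)) = f s
    simp_rw [← Coind.map_mul_left, ← hp_left, mul_single, ← map_sum, Finset.univ_sum_single, hpi]

theorem memAdd_of_memAdd_coind (hCP : IsCentrallyProjective l) {Z : Type} [AddCommGroup Z]
    [Module S Z] [Module R Z] (hZ : ∀ (r : R) (z : Z), r • z = l r • z)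
    (h : MemAdd S (Coind l M) Z) : MemAdd R M Z :=
  letI := Module.compHom (Coind l M) l
  (hCP.memAdd_coind fun _ _ => rfl).trans (h.restrictScalars l (fun _ _ => rfl) hZ)

end IsCentrallyProjective

structure FrobeniusSystem {R S : Type} [Ring R] [Ring S] (l : R →+* S) where
  E : S →+ R
  m : ℕ
  x : Fin m → S
  y : Fin m → S
  map_mul_left : ∀ r s, E (l r * s) = r * E s
  map_mul_right : ∀ s r, E (s * l r) = E s * r
  sum_x_mul_E : ∀ s, ∑ i, x i * l (E (y i * s)) = s
  sum_E_mul_y : ∀ s, ∑ i, l (E (s * x i)) * y i = s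

namespace FrobeniusSystem

variable {R S : Type} [Ring R] [Ring S] {l : R →+* S} {M N X V : Type} [AddCommGroup M]
  [Module R M] [AddCommGroup N] [Module R N] [AddCommGroup X] [Module R X]
  [AddCommGroup V] [Module S V]

section

variable (F : FrobeniusSystem l)

/-- `F.tmul s v` is the image of `s ⊗ v` under the isomorphism `S ⊗_R M ≅ Hom_R(S, M)`. -/
def tmul : S →+ M →+ Coind l M :=
  AddMonoidHom.mk'
    (fun s => AddMonoidHom.mk'
      (fun v => Coind.mk
        { toFun s' := F.E (s' * s) • v
          map_zero' := by simp
          map_add' a b := by simp [add_mul, add_smul] }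
        fun r s' => by simp [mul_assoc, F.map_mul_left, mul_smul])
      fun v w => Coind.ext fun s' => by simp)
    fun s t => AddMonoidHom.ext fun v => Coind.ext fun s' => by simp [mul_add, add_smul]

@[simp]
theorem tmul_apply (s : S) (v : M) (s' : S) : F.tmul s v s' = F.E (s' * s) • v := rfl

theorem smul_tmul (s₀ s : S) (v : M) : s₀ • F.tmul s v = F.tmul (s₀ * s) v :=
  Coind.ext fun s' => by simp [mul_assoc]

theorem tmul_mul_smul (s : S) (r : R) (v : M) : F.tmul (s * l r) v = F.tmul s (r • v) :=
  Coind.ext fun s' => by simp [← mul_assoc, F.map_mul_right, mul_smul]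

theorem map_tmul (g : M →ₗ[R] N) (s : S) (v : M) :
    Coind.map l g (F.tmul s v) = F.tmul s (g v) :=
  Coind.ext fun s' => by simp

theorem sum_tmul (f : Coind l M) : ∑ i, F.tmul (F.x i) (f (F.y i)) = f := by
  ext s
  simp only [Coind.sum_apply, tmul_apply, ← Coind.map_mul_left, ← map_sum, F.sum_E_mul_y]

theorem linearMap_ext {g h : Coind l M →ₗ[S] V} (H : ∀ s v, g (F.tmul s v) = h (F.tmul s v)) :
    g = h := by
  ext f
  rw [← F.sum_tmul f, map_sum, map_sum]
  simp only [H]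

section Lift

variable [Module R V]

/-- The dual-basis formula for `s ⊗ v ↦ s • h v`. -/
def liftAddHom (h : M →ₗ[R] V) : Coind l M →+ V where
  toFun f := ∑ i, F.x i • h (f (F.y i))
  map_zero' := by simp
  map_add' f g := by simp [Finset.sum_add_distrib]

theorem liftAddHom_tmul (hV : ∀ (r : R) (v : V), r • v = l r • v) (h : M →ₗ[R] V) (s : S)
    (v : M) : F.liftAddHom h (F.tmul s v) = s • h v := by
  simp [liftAddHom, hV, smul_smul, ← Finset.sum_smul, F.sum_x_mul_E]

def lift (hV : ∀ (r : R) (v : V), r • v = l r • v) (h : M →ₗ[R] V) : Coind l M →ₗ[S] V :=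
  { F.liftAddHom h with
    map_smul' s₀ f := by
      rw [← F.sum_tmul f, Finset.smul_sum]
      simp [map_sum, F.smul_tmul, F.liftAddHom_tmul hV, mul_smul, Finset.smul_sum] }

theorem lift_tmul (hV : ∀ (r : R) (v : V), r • v = l r • v) (h : M →ₗ[R] V) (s : S) (v : M) :
    F.lift hV h (F.tmul s v) = s • h v :=
  F.liftAddHom_tmul hV h s v

/-- Frobenius reciprocity: `Coind l`, right adjoint to restriction of scalars, is also its left
adjoint. -/
def homEquiv (hV : ∀ (r : R) (v : V), r • v = l r • v) :
    (M →ₗ[R] V) ≃ (Coind l M →ₗ[S] V) where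
  toFun := F.lift hV
  invFun g :=
    { toFun v := g (F.tmul 1 v)
      map_add' v w := by simp
      map_smul' r v := by
        rw [RingHom.id_apply, hV, ← map_smul, F.smul_tmul, ← F.tmul_mul_smul, mul_one, one_mul] }
  left_inv h := LinearMap.ext fun v => by simp [F.lift_tmul hV]
  right_inv g := F.linearMap_ext fun s v => by simp [F.lift_tmul hV, ← map_smul, F.smul_tmul]

theorem homEquiv_comp_map (hV : ∀ (r : R) (v : V), r • v = l r • v) (h : N →ₗ[R] V)
    (g : M →ₗ[R] N) : F.homEquiv hV h ∘ₗ Coind.map l g = F.homEquiv hV (h ∘ₗ g) :=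
  F.linearMap_ext fun s v => by simp [homEquiv, F.map_tmul, F.lift_tmul hV]

end Lift

end

theorem isLeftApprox_map (F : FrobeniusSystem l) (hCP : IsCentrallyProjective l) {ω : Type}
    [AddCommGroup ω] [Module R ω] {f : M →ₗ[R] X} (hf : IsLeftApprox R ω f) :
    IsLeftApprox S (Coind l ω) (Coind.map l f) := by
  intro Z _ _ hZ g
  let _ := Module.compHom Z l
  have hlZ : ∀ (r : R) (z : Z), r • z = l r • z := fun _ _ => rfl
  obtain ⟨h, hh⟩ := hf Z (hCP.memAdd_of_memAdd_coind hlZ hZ) ((F.homEquiv hlZ).symm g)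
  exact ⟨F.homEquiv hlZ h, by rw [F.homEquiv_comp_map, hh, Equiv.apply_symm_apply]⟩

theorem mem_range_map_iff (F : FrobeniusSystem l) {g : M →ₗ[R] N} {u : Coind l N} :
    u ∈ LinearMap.range (Coind.map l g) ↔ ∀ s, u s ∈ LinearMap.range g := by
  refine ⟨fun ⟨f, hf⟩ s => ⟨f s, by rw [← hf, Coind.map_apply]⟩, fun hu => ?_⟩
  choose c hc using fun i => hu (F.y i)
  refine ⟨∑ i, F.tmul (F.x i) (c i), ?_⟩
  simp only [map_sum, F.map_tmul, hc, F.sum_tmul]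

/-- `Coind l` is exact, as `_R S` is projective. -/
def quotientRangeMapEquiv (F : FrobeniusSystem l) (f : M →ₗ[R] X) :
    (Coind l X ⧸ LinearMap.range (Coind.map l f)) ≃ₗ[S] Coind l (X ⧸ LinearMap.range f) :=
  have hker : LinearMap.range (Coind.map l f) =
      LinearMap.ker (Coind.map l (LinearMap.range f).mkQ) := by
    ext u
    rw [F.mem_range_map_iff]
    simp [Coind.ext_iff]
  have hsurj : Function.Surjective (Coind.map l (LinearMap.range f).mkQ) := fun u =>
    F.mem_range_map_iff.2 fun s => by simp
  (Submodule.quotEquivOfEq _ _ hker).trans (LinearMap.quotKerEquivOfSurjective _ hsurj)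

end FrobeniusSystem

namespace IsInducedTensor

variable {R S : Type} [Ring R] [Ring S] {l : R →+* S} {M W W' V : Type} [AddCommGroup M]
  [Module R M] [AddCommGroup W] [Module S W] [AddCommGroup W'] [Module S W']
  [AddCommGroup V] [Module S V] {t : S →+ M →+ W} {t' : S →+ M →+ W'}

theorem linearMap_ext (ht : IsInducedTensor l M W t) {g h : W →ₗ[S] V}
    (H : ∀ s m, g (t s m) = h (t s m)) : g = h := by
  obtain ⟨hbal, hequiv, huniv⟩ := ht
  refine (huniv V (t.compr₂ g.toAddMonoidHom) (fun s r m => ?_) (fun s' s m => ?_)).unique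
    (fun _ _ => rfl) fun s m => (H s m).symm
  · simp [hbal]
  · simp [hequiv]

theorem nonempty_linearEquiv (ht : IsInducedTensor l M W t) (ht' : IsInducedTensor l M W' t') :
    Nonempty (W ≃ₗ[S] W') := by
  obtain ⟨φ, hφ, -⟩ := ht.2.2 W' t' ht'.1 ht'.2.1
  obtain ⟨ψ, hψ, -⟩ := ht'.2.2 W t ht.1 ht.2.1
  exact ⟨LinearEquiv.ofLinearMap φ ψ (ht'.linearMap_ext fun s m => by simp [hψ, hφ])
    (ht.linearMap_ext fun s m => by simp [hφ, hψ])⟩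

end IsInducedTensor

theorem isInducedTensor_self {R S : Type} [Ring R] [Ring S] (l : R →+* S) :
    IsInducedTensor l R S (AddMonoidHom.mul.compl₂ l.toAddMonoidHom) := by
  refine ⟨fun s r m => by simp [mul_assoc], fun s' s m => by simp [mul_assoc],
    fun V _ _ b hbal hequiv => ⟨LinearMap.toSpanSingleton S V (b 1 1), fun s r => ?_,
      fun h hh => LinearMap.ext_ring ?_⟩⟩
  · simp only [AddMonoidHom.compl₂_apply, AddMonoidHom.mul_apply, RingHom.toAddMonoidHom_eq_coe,
      AddMonoidHom.coe_coe, LinearMap.toSpanSingleton_apply]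
    rw [← hequiv, mul_one, hbal, smul_eq_mul, mul_one]
  · simpa using hh 1 1

theorem FrobeniusSystem.isInducedTensor {R S : Type} [Ring R] [Ring S] {l : R →+* S}
    (F : FrobeniusSystem l) (M : Type) [AddCommGroup M] [Module R M] :
    IsInducedTensor l M (Coind l M) F.tmul := by
  refine ⟨fun s r m => F.tmul_mul_smul s r m, fun s' s m => (F.smul_tmul s' s m).symm,
    fun V _ _ b hbal hequiv => ?_⟩
  let _ := Module.compHom V l
  have hV : ∀ (r : R) (v : V), r • v = l r • v := fun _ _ => rfl
  have hb (s : S) (m : M) : b s m = s • b 1 m := by rw [← hequiv, mul_one]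
  let b₁ : M →ₗ[R] V :=
    { toFun := b 1
      map_add' := map_add (b 1)
      map_smul' r m := by rw [RingHom.id_apply, hV, ← hbal, one_mul, hb] }
  refine ⟨F.lift hV b₁, fun s m => by rw [F.lift_tmul, hb s m]; rfl, fun h hh => ?_⟩
  exact F.linearMap_ext fun s m => by rw [hh, F.lift_tmul, hb s m]; rfl

theorem FrobeniusSystem.approxChain_coind {R S : Type} [Ring R] [Ring S] {l : R →+* S}
    (F : FrobeniusSystem l) (hCP : IsCentrallyProjective l) {ω : Type} [AddCommGroup ω]
    [Module R ω] :
    ∀ (k : ℕ) (M : ModuleCat.{0} R), ApproxChain R ω k M →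
      ApproxChain S (Coind l ω) k (ModuleCat.of S (Coind l M))
  | 0, _, _ => trivial
  | k + 1, _, ⟨X, f, hX, hf, happrox, hchain⟩ =>
    ⟨ModuleCat.of S (Coind l X), Coind.map l f, hX.coind l, Coind.map_injective hf,
      F.isLeftApprox_map hCP happrox,
      (F.approxChain_coind hCP k _ hchain).of_linearEquiv (F.quotientRangeMapEquiv f)⟩

theorem fadim_of_inducedTensor_general
    (R S : Type) [Ring R] [Ring S] (l : R →+* S)
    (hFrob : IsFrobeniusExtension l) (hCP : IsCentrallyProjective l)
    (ω : Type) [AddCommGroup ω] [Module R ω] (n : ℕ)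
    (hfadim : ApproxChain R ω (n + 2) (ModuleCat.of R R))
    (W : Type) [AddCommGroup W] [Module S W] (t : S →+ ω →+ W)
    (hW : IsInducedTensor l ω W t) :
    ApproxChain S W (n + 2) (ModuleCat.of S S) := by
  obtain ⟨E, m, x, y, hE_left, hE_right, hxy, hyx⟩ := hFrob
  let F : FrobeniusSystem l := ⟨E, m, x, y, hE_left, hE_right, hxy, hyx⟩
  obtain ⟨eS⟩ := (isInducedTensor_self l).nonempty_linearEquiv (F.isInducedTensor R)
  obtain ⟨eW⟩ := (F.isInducedTensor ω).nonempty_linearEquiv hW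
  exact ((F.approxChain_coind hCP (n + 2) _ hfadim).of_linearEquiv eS).of_generator_linearEquiv eW

/-- Let `S/R` be a Frobenius extension of two-sided Noetherian rings
with the bimodule `_R S_R` centrally projective over `R`.  If `ω` is a finitely
generated `R`-module with `fadim_R ω ≥ n + 2` and `Ext^i_R(ω, ω) = 0` for `1 ≤ i ≤ n`,
then `fadim_S (S ⊗_R ω) ≥ n + 2`. -/
theorem fadim_of_inducedTensor
    (R S : Type) [Ring R] [Ring S] [IsNoetherianRing R] [IsNoetherianRing Rᵐᵒᵖ]
    [IsNoetherianRing S] [IsNoetherianRing Sᵐᵒᵖ] (l : R →+* S)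
    (hFrob : IsFrobeniusExtension l) (hCP : IsCentrallyProjective l)
    (ω : Type) [AddCommGroup ω] [Module R ω] [Module.Finite R ω] (n : ℕ)
    (hfadim : ApproxChain R ω (n + 2) (ModuleCat.of R R))
    (hself : ∀ i, 1 ≤ i → i ≤ n → ExtVanish R i ω ω)
    (W : Type) [AddCommGroup W] [Module S W] (t : S →+ ω →+ W)
    (hW : IsInducedTensor l ω W t) :
    ApproxChain S W (n + 2) (ModuleCat.of S S) :=
  fadim_of_inducedTensor_general R S l hFrob hCP ω n hfadim W t hW

end
end

section
/- Let S/R be a Frobenius extension with _R S_R centrally projective over R, ω a Wakamatsu tilting R-module, T = End_R(ω) and Γ = End_S(S ⊗_R ω). If ω has finite projective dimension as a right T-module, then the natural ring homomorphism ρ: T → Γ, sending f to id_S ⊗ f, is a Frobenius extension. -/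
open CategoryTheory

noncomputable section

/-- `ω` is a Wakamatsu tilting `A`-module: finitely generated, self-orthogonal
(`Ext^i_A(ω, ω) = 0` for all `i ≥ 1`) and of infinite faithful dimension. -/
def IsWakamatsuTilting (A : Type) [Ring A] (ω : Type) [AddCommGroup ω] [Module A ω] :
    Prop :=
  Module.Finite A ω ∧ (∀ i, 1 ≤ i → ExtVanish A i ω ω) ∧
    ∀ n, ApproxChain A ω n (ModuleCat.of A A)

/-- There is a projective resolution `0 → P_n → ⋯ → P_0 → M → 0` of length `n`,
i.e. the projective dimension of `M` is at most `n`. -/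
def ProjDimLe (A : Type) [Ring A] : ℕ → ModuleCat.{0} A → Prop
  | 0, M => Module.Projective A M
  | n + 1, M =>
    ∃ (P : ModuleCat.{0} A) (f : P →ₗ[A] M), Module.Projective A P ∧
      Function.Surjective f ∧ ProjDimLe A n (ModuleCat.of A (LinearMap.ker f))

set_option maxHeartbeats 1000000 in
/-- Let `S/R` be a Frobenius extension with `_R S_R` centrally
projective over `R`, `ω` a Wakamatsu tilting `R`-module, `T = End_R(ω)` and
`Γ = End_S(S ⊗_R ω)`.  If `ω` has finite projective dimension as a right `T`-module,
then the natural ring homomorphism `ρ : T → Γ`, `f ↦ id_S ⊗ f`, is a Frobenius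
extension.

`(W, t)` realizes the induced module `S ⊗_R ω`, and `ρ` is characterized by
`ρ f (s ⊗ w) = s ⊗ f w`.  As rings, `T` and `Γ` are realized as `Module.End R ω`
and `Module.End S W` (the paper's `T`, `Γ` are their opposites; the Frobenius
property is left-right symmetric, so this is equivalent). -/
theorem frobenius_of_endomorphism_extension
    (R S : Type) [Ring R] [Ring S] [IsNoetherianRing R] [IsNoetherianRing Rᵐᵒᵖ]
    [IsNoetherianRing S] [IsNoetherianRing Sᵐᵒᵖ] (l : R →+* S)
    (hFrob : IsFrobeniusExtension l) (hCP : IsCentrallyProjective l)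
    (ω : Type) [AddCommGroup ω] [Module R ω] (hω : IsWakamatsuTilting R ω)
    (hpd : ∃ n, ProjDimLe (Module.End R ω) n (ModuleCat.of (Module.End R ω) ω))
    (W : Type) [AddCommGroup W] [Module S W] (t : S →+ ω →+ W)
    (hW : IsInducedTensor l ω W t)
    (ρ : Module.End R ω →+* Module.End S W)
    (hρ : ∀ (f : Module.End R ω) (s : S) (w : ω), ρ f (t s w) = t s (f w)) :
    IsFrobeniusExtension ρ := by
  classical
  obtain ⟨E, m, x, y, hE1, hE2, hxy1, hxy2⟩ := hFrob
  obtain ⟨n, i, p, hi1, hi2, hp1, hp2, hpi⟩ := hCP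
  obtain ⟨ht1, ht2, hUP⟩ := hW
  -- basic fact: t s w = s • t 1 w
  have hts : ∀ (s : S) (w : ω), t s w = s • t 1 w := by
    intro s w
    have := ht2 s 1 w
    rwa [mul_one] at this
  -- the centralizer elements c j
  set δ : Fin n → (Fin n → R) := fun j k => if k = j then 1 else 0 with hδ
  set c : Fin n → S := fun j => p (δ j) with hc
  have hccomm : ∀ (r : R) (j : Fin n), l r * c j = c j * l r := by
    intro r j
    have h1 : (fun k => r * δ j k) = (fun k => δ j k * r) := by
      funext k
      by_cases h : k = j <;> simp [hδ, h]
    calc l r * c j = p (fun k => r * δ j k) := (hp1 r (δ j)).symm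
      _ = p (fun k => δ j k * r) := by rw [h1]
      _ = c j * l r := hp2 (δ j) r
  -- p v = ∑ j, c j * l (v j) = ∑ j, l (v j) * c j
  have hvsum : ∀ v : Fin n → R, v = ∑ j, (fun k => δ j k * v j) := by
    intro v
    funext k
    rw [Finset.sum_apply]
    simp only [hδ, ite_mul, one_mul, zero_mul]
    rw [Finset.sum_ite_eq]
    simp
  have hpsum : ∀ v : Fin n → R, p v = ∑ j, c j * l (v j) := by
    intro v
    conv_lhs => rw [hvsum v]
    rw [map_sum]
    exact Finset.sum_congr rfl fun j _ => hp2 (δ j) (v j)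
  have hpsum' : ∀ v : Fin n → R, p v = ∑ j, l (v j) * c j := by
    intro v
    conv_lhs => rw [hvsum v]
    rw [map_sum]
    refine Finset.sum_congr rfl fun j _ => ?_
    have h1 : (fun k => δ j k * v j) = (fun k => v j * δ j k) := by
      funext k
      by_cases h : k = j <;> simp [hδ, h]
    rw [h1]
    exact hp1 (v j) (δ j)
  have hisum : ∀ s : S, ∑ j, c j * l (i s j) = s := fun s =>
    (hpsum (i s)).symm.trans (hpi s)
  have hisum' : ∀ s : S, ∑ j, l (i s j) * c j = s := fun s =>
    (hpsum' (i s)).symm.trans (hpi s)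
  -- the dual centralizer elements ĉ j
  set d : Fin n → S := fun j => ∑ k, x k * l (i (y k) j) with hd
  have hdE : ∀ (s : S) (j : Fin n), E (s * d j) = i s j := by
    intro s j
    have h1 : s * d j = ∑ k, s * x k * l (i (y k) j) := by
      rw [hd, Finset.mul_sum]
      exact Finset.sum_congr rfl fun k _ => (mul_assoc _ _ _).symm
    have h2 : E (s * d j) = ∑ k, E (s * x k) * i (y k) j := by
      rw [h1, map_sum]
      exact Finset.sum_congr rfl fun k _ => hE2 (s * x k) (i (y k) j)
    have h3 : i s j = ∑ k, E (s * x k) * i (y k) j := by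
      conv_lhs => rw [← hxy2 s]
      rw [map_sum, Finset.sum_apply]
      exact Finset.sum_congr rfl fun k _ => by rw [hi1]
    rw [h2, ← h3]
  -- Casimir-type lemma for the bimodule map i · j
  have casimir : ∀ (σ : S) (j : Fin n),
      ∑ k, σ * x k * l (i (y k) j) = ∑ k, x k * l (i (y k * σ) j) := by
    intro σ j
    have step1 : ∀ k, σ * x k * l (i (y k) j)
        = ∑ k', x k' * l (E (y k' * (σ * x k)) * i (y k) j) := by
      intro k
      conv_lhs => rw [show σ * x k = ∑ k', x k' * l (E (y k' * (σ * x k))) from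
        (hxy1 (σ * x k)).symm]
      rw [Finset.sum_mul]
      exact Finset.sum_congr rfl fun k' _ => by rw [mul_assoc, ← map_mul]
    calc ∑ k, σ * x k * l (i (y k) j)
        = ∑ k, ∑ k', x k' * l (E (y k' * (σ * x k)) * i (y k) j) :=
          Finset.sum_congr rfl fun k _ => step1 k
      _ = ∑ k', x k' * l (∑ k, E (y k' * (σ * x k)) * i (y k) j) := by
          rw [Finset.sum_comm]
          exact Finset.sum_congr rfl fun k' _ => by rw [map_sum, Finset.mul_sum]
      _ = ∑ k', x k' * l (i (y k' * σ) j) := by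
          refine Finset.sum_congr rfl fun k' _ => ?_
          congr 1
          have h4 : ∀ k, E (y k' * (σ * x k)) * i (y k) j
              = i (l (E (y k' * σ * x k)) * y k) j := by
            intro k
            rw [hi1, ← mul_assoc]
          rw [Finset.sum_congr rfl fun k _ => h4 k]
          have h5 : ∑ k, i (l (E (y k' * σ * x k)) * y k) j
              = i (∑ k, l (E (y k' * σ * x k)) * y k) j := by
            rw [map_sum, Finset.sum_apply]
          rw [h5, hxy2 (y k' * σ)]
  have hdcomm : ∀ (r : R) (j : Fin n), l r * d j = d j * l r := by
    intro r j
    have h1 : d j * l r = ∑ k, x k * l (i (y k * l r) j) := by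
      rw [hd, Finset.sum_mul]
      refine Finset.sum_congr rfl fun k _ => ?_
      rw [mul_assoc, ← map_mul, hi2]
    have h2 : l r * d j = ∑ k, l r * x k * l (i (y k) j) := by
      rw [hd, Finset.mul_sum]
      exact Finset.sum_congr rfl fun k _ => (mul_assoc _ _ _).symm
    rw [h1, h2, casimir (l r) j]
  -- key identity D7
  have hD7 : ∀ σ : S, ∑ j, d j * l (E (c j * σ)) = σ := by
    intro σ
    have h1 : ∀ j, d j * l (E (c j * σ)) = ∑ k, x k * l (i (y k) j * E (c j * σ)) := by
      intro j
      rw [hd, Finset.sum_mul]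
      exact Finset.sum_congr rfl fun k _ => by rw [mul_assoc, ← map_mul]
    calc ∑ j, d j * l (E (c j * σ))
        = ∑ j, ∑ k, x k * l (i (y k) j * E (c j * σ)) :=
          Finset.sum_congr rfl fun j _ => h1 j
      _ = ∑ k, x k * l (∑ j, i (y k) j * E (c j * σ)) := by
          rw [Finset.sum_comm]
          exact Finset.sum_congr rfl fun k _ => by rw [map_sum, Finset.mul_sum]
      _ = ∑ k, x k * l (E (y k * σ)) := by
          refine Finset.sum_congr rfl fun k _ => ?_
          congr 1
          have h2 : ∀ j, i (y k) j * E (c j * σ) = E (l (i (y k) j) * (c j * σ)) := by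
            intro j
            rw [hE1]
          rw [Finset.sum_congr rfl fun j _ => h2 j]
          have h3 : ∑ j, E (l (i (y k) j) * (c j * σ)) = E ((∑ j, l (i (y k) j) * c j) * σ) := by
            rw [Finset.sum_mul, map_sum]
            exact Finset.sum_congr rfl fun j _ => by rw [mul_assoc]
          rw [h3, hisum' (y k)]
      _ = σ := hxy1 σ
  have hD8 : ∀ σ : S, ∑ j, c j * l (E (σ * d j)) = σ := by
    intro σ
    have : ∀ j, c j * l (E (σ * d j)) = c j * l (i σ j) := fun j => by rw [hdE]
    rw [Finset.sum_congr rfl fun j _ => this j]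
    exact hisum σ
  -- W is generated as an additive group by the elements t s w
  have hmem : ∀ v : W, v ∈ AddSubgroup.closure {v : W | ∃ s w, t s w = v} := by
    set Tset : Set W := {v : W | ∃ s w, t s w = v} with hTset
    have hsmul_mem : ∀ (s' : S) (v : W), v ∈ AddSubgroup.closure Tset →
        s' • v ∈ AddSubgroup.closure Tset := by
      intro s' v hv
      refine AddSubgroup.closure_induction (p := fun v _ => s' • v ∈ AddSubgroup.closure Tset)
        ?_ ?_ ?_ ?_ hv
      · rintro v ⟨s, w, rfl⟩
        rw [← ht2 s' s w]
        exact AddSubgroup.subset_closure ⟨s' * s, w, rfl⟩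
      · show s' • (0 : W) ∈ AddSubgroup.closure Tset
        rw [smul_zero]; exact zero_mem _
      · intro a b _ _ ha hb
        show s' • (a + b) ∈ AddSubgroup.closure Tset
        rw [smul_add]; exact add_mem ha hb
      · intro a _ ha
        show s' • (-a) ∈ AddSubgroup.closure Tset
        rw [smul_neg]; exact neg_mem ha
    set N : Submodule S W :=
      { carrier := AddSubgroup.closure Tset
        add_mem' := fun ha hb => add_mem ha hb
        zero_mem' := zero_mem _
        smul_mem' := fun s' v hv => hsmul_mem s' v hv } with hN
    have hmemN : ∀ (s : S) (w : ω), t s w ∈ N := fun s w =>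
      AddSubgroup.subset_closure ⟨s, w, rfl⟩
    set bN : S →+ ω →+ N :=
      { toFun := fun s =>
          { toFun := fun w => (⟨t s w, hmemN s w⟩ : N)
            map_zero' := Subtype.ext (by simp)
            map_add' := fun w₁ w₂ => Subtype.ext (by simp) }
        map_zero' := AddMonoidHom.ext fun w => Subtype.ext (by simp)
        map_add' := fun s₁ s₂ => AddMonoidHom.ext fun w => Subtype.ext (by simp) } with hbN
    obtain ⟨hNmap, hhN, -⟩ := hUP N bN
      (fun s r w => Subtype.ext (ht1 s r w))
      (fun s' s w => Subtype.ext (ht2 s' s w))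
    obtain ⟨h₀, hh₀, hu₀⟩ := hUP W t ht1 ht2
    have e1 : N.subtype.comp hNmap = h₀ := by
      refine hu₀ _ fun s w => ?_
      simp only [LinearMap.comp_apply, hhN]
      rfl
    have e2 : LinearMap.id (R := S) (M := W) = h₀ := hu₀ _ fun s w => rfl
    intro v
    have : (N.subtype.comp hNmap) v = LinearMap.id (R := S) (M := W) v := by rw [e1, e2]
    have hv : ((hNmap v : N) : W) = v := this
    rw [← hv]
    exact (hNmap v).2
  -- induction principle for W
  have ind : ∀ (P : W → Prop), (∀ s w, P (t s w)) → P 0 →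
      (∀ a b, P a → P b → P (a + b)) → (∀ a, P a → P (-a)) → ∀ v, P v := by
    intro P hgen h0 hadd hneg v
    refine AddSubgroup.closure_induction (p := fun v _ => P v) ?_ h0
      (fun a b _ _ => hadd a b) (fun a _ => hneg a) (hmem v)
    rintro v ⟨s, w, rfl⟩
    exact hgen s w
  -- the S-module S →+ ω used to construct ε
  letI instSMul : SMul S (S →+ ω) := ⟨fun s f => f.comp (AddMonoidHom.mulRight s)⟩
  have smul_def : ∀ (s : S) (f : S →+ ω) (s' : S), (s • f) s' = f (s' * s) := fun _ _ _ => rfl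
  letI instMod : Module S (S →+ ω) :=
    { smul := fun s f => f.comp (AddMonoidHom.mulRight s)
      one_smul := fun f => AddMonoidHom.ext fun s' => by
        show f (s' * 1) = f s'
        rw [mul_one]
      mul_smul := fun s₁ s₂ f => AddMonoidHom.ext fun s' => by
        show f (s' * (s₁ * s₂)) = f (s' * s₁ * s₂)
        rw [mul_assoc]
      smul_zero := fun s => AddMonoidHom.ext fun s' => rfl
      smul_add := fun s f g => AddMonoidHom.ext fun s' => rfl
      add_smul := fun s₁ s₂ f => AddMonoidHom.ext fun s' => by
        show f (s' * (s₁ + s₂)) = f (s' * s₁) + f (s' * s₂)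
        rw [mul_add, map_add]
      zero_smul := fun f => AddMonoidHom.ext fun s' => by
        show f (s' * 0) = 0
        rw [mul_zero, map_zero] }
  set bE : S →+ ω →+ (S →+ ω) :=
    { toFun := fun s =>
        { toFun := fun w =>
            { toFun := fun s' => E (s' * s) • w
              map_zero' := by
                show E ((0 : S) * s) • w = 0
                rw [zero_mul, map_zero, zero_smul]
              map_add' := fun a b => by
                show E ((a + b) * s) • w = E (a * s) • w + E (b * s) • w
                rw [add_mul, map_add, add_smul] }
          map_zero' := AddMonoidHom.ext fun s' => by simp
          map_add' := fun w₁ w₂ => AddMonoidHom.ext fun s' => by simp }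
      map_zero' := AddMonoidHom.ext fun w => AddMonoidHom.ext fun s' => by simp
      map_add' := fun s₁ s₂ => AddMonoidHom.ext fun w => AddMonoidHom.ext fun s' => by
        simp [mul_add, add_smul] } with hbE
  have hbE_apply : ∀ (s : S) (w : ω) (s' : S), bE s w s' = E (s' * s) • w := fun _ _ _ => rfl
  obtain ⟨hε, hhε, -⟩ := hUP (S →+ ω) bE
    (by
      intro s r w
      refine AddMonoidHom.ext fun s' => ?_
      rw [hbE_apply, hbE_apply, ← mul_assoc, hE2, mul_smul])
    (by
      intro s'' s w
      refine AddMonoidHom.ext fun s' => ?_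
      rw [hbE_apply, smul_def, hbE_apply, mul_assoc])
  set ε : W →+ ω :=
    { toFun := fun v => hε v 1
      map_zero' := by
        show hε 0 1 = 0
        rw [map_zero]; rfl
      map_add' := fun a b => by
        show hε (a + b) 1 = hε a 1 + hε b 1
        rw [map_add]; rfl } with hεdef
  have hεt : ∀ (s : S) (w : ω), ε (t s w) = E s • w := by
    intro s w
    show hε (t s w) 1 = E s • w
    rw [hhε, hbE_apply, one_mul]
  have εsemi : ∀ (r : R) (v : W), ε (l r • v) = r • ε v := by
    intro r
    refine ind _ ?_ ?_ ?_ ?_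
    · intro s w
      show ε (l r • t s w) = r • ε (t s w)
      rw [← ht2, hεt, hεt, hE1, mul_smul]
    · show ε (l r • (0 : W)) = r • ε 0
      simp
    · intro a b ha hb
      show ε (l r • (a + b)) = r • ε (a + b)
      rw [smul_add, map_add, map_add, smul_add, ha, hb]
    · intro a ha
      show ε (l r • (-a)) = r • ε (-a)
      rw [smul_neg, map_neg, map_neg, smul_neg, ha]
  have εf : ∀ (f : Module.End R ω) (v : W), ε (ρ f v) = f (ε v) := by
    intro f
    refine ind _ ?_ ?_ ?_ ?_
    · intro s w
      show ε (ρ f (t s w)) = f (ε (t s w))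
      rw [hρ, hεt, hεt, map_smul]
    · show ε (ρ f (0 : W)) = f (ε 0)
      simp
    · intro a b ha hb
      show ε (ρ f (a + b)) = f (ε (a + b))
      rw [map_add, map_add, map_add, map_add, ha, hb]
    · intro a ha
      show ε (ρ f (-a)) = f (ε (-a))
      rw [map_neg, map_neg, map_neg, map_neg, ha]
  -- right multiplication operators
  have hμ : ∀ c₀ : S, (∀ r : R, l r * c₀ = c₀ * l r) →
      ∃ g : Module.End S W, ∀ s w, g (t s w) = t (s * c₀) w := by
    intro c₀ hc₀
    obtain ⟨g, hg, -⟩ := hUP W (t.comp (AddMonoidHom.mulRight c₀))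
      (by
        intro s r w
        show t (s * l r * c₀) w = t (s * c₀) (r • w)
        rw [mul_assoc, hc₀ r, ← mul_assoc, ht1])
      (by
        intro s' s w
        show t (s' * s * c₀) w = s' • t (s * c₀) w
        rw [mul_assoc, ht2])
    exact ⟨g, fun s w => hg s w⟩
  choose X hX using fun j : Fin n => hμ (c j) (fun r => hccomm r j)
  choose Y hY using fun j : Fin n => hμ (d j) (fun r => hdcomm r j)
  -- the Frobenius homomorphism E' : Γ → T
  set E' : Module.End S W →+ Module.End R ω :=
    { toFun := fun γ =>
        { toFun := fun w => ε (γ (t 1 w))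
          map_add' := fun a b => by
            show ε (γ (t 1 (a + b))) = ε (γ (t 1 a)) + ε (γ (t 1 b))
            rw [map_add, map_add, map_add]
          map_smul' := fun r w => by
            show ε (γ (t 1 (r • w))) = r • ε (γ (t 1 w))
            have h1 : t 1 (r • w) = l r • t 1 w := by
              rw [← ht1 1 r w, one_mul, ← mul_one (l r), ht2, mul_one]
            rw [h1, map_smul, εsemi] }
      map_zero' := LinearMap.ext fun w => by
        show ε ((0 : Module.End S W) (t 1 w)) = 0
        rw [LinearMap.zero_apply, map_zero]
      map_add' := fun γ₁ γ₂ => LinearMap.ext fun w => by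
        show ε ((γ₁ + γ₂) (t 1 w)) = ε (γ₁ (t 1 w)) + ε (γ₂ (t 1 w))
        rw [LinearMap.add_apply, map_add] } with hE'
  have hE'apply : ∀ (γ : Module.End S W) (w : ω), E' γ w = ε (γ (t 1 w)) := fun _ _ => rfl
  refine ⟨E', n, X, Y, ?_, ?_, ?_, ?_⟩
  · -- E' (ρ f * γ) = f * E' γ
    intro f γ
    refine LinearMap.ext fun w => ?_
    rw [hE'apply, Module.End.mul_apply, εf]
    rfl
  · -- E' (γ * ρ f) = E' γ * f
    intro γ f
    refine LinearMap.ext fun w => ?_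
    rw [hE'apply, Module.End.mul_apply, hρ]
    rfl
  · -- first dual basis identity
    intro γ
    have claimA : ∀ (s : S) (v : W), ∑ j, t (s * c j) (ε (Y j v)) = s • v := by
      intro s
      refine ind _ ?_ ?_ ?_ ?_
      · intro σ u
        have h1 : ∀ j, t (s * c j) (ε (Y j (t σ u))) = t (s * (c j * l (i σ j))) u := by
          intro j
          rw [hY, hεt, hdE, ← ht1, mul_assoc]
        rw [Finset.sum_congr rfl fun j _ => h1 j]
        have h2 : ∑ j, t (s * (c j * l (i σ j))) u = t (∑ j, s * (c j * l (i σ j))) u := by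
          rw [map_sum, AddMonoidHom.finset_sum_apply]
        rw [h2, ← Finset.mul_sum, hisum, ht2]
      · simp
      · intro a b ha hb
        have : ∀ j, t (s * c j) (ε (Y j (a + b)))
            = t (s * c j) (ε (Y j a)) + t (s * c j) (ε (Y j b)) := by
          intro j
          rw [map_add, map_add, map_add]
        rw [Finset.sum_congr rfl fun j _ => this j, Finset.sum_add_distrib, ha, hb, smul_add]
      · intro a ha
        have : ∀ j, t (s * c j) (ε (Y j (-a))) = -(t (s * c j) (ε (Y j a))) := by
          intro j
          rw [map_neg, map_neg, map_neg]
        rw [Finset.sum_congr rfl fun j _ => this j, Finset.sum_neg_distrib, ha, smul_neg]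
    refine LinearMap.ext fun v => ?_
    refine ind (fun v => (∑ j, X j * ρ (E' (Y j * γ))) v = γ v) ?_ ?_ ?_ ?_ v
    · intro s w
      rw [LinearMap.sum_apply]
      have h1 : ∀ j : Fin n, (X j * ρ (E' (Y j * γ))) (t s w)
          = t (s * c j) (ε (Y j (γ (t 1 w)))) := by
        intro j
        rw [Module.End.mul_apply, hρ, hX]
        congr 1
      rw [Finset.sum_congr rfl fun j _ => h1 j, claimA s (γ (t 1 w)), hts s w, map_smul]
    · show (∑ j, X j * ρ (E' (Y j * γ))) (0 : W) = γ 0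
      rw [map_zero, map_zero]
    · intro a b ha hb
      show (∑ j, X j * ρ (E' (Y j * γ))) (a + b) = γ (a + b)
      rw [map_add, map_add, ha, hb]
    · intro a ha
      show (∑ j, X j * ρ (E' (Y j * γ))) (-a) = γ (-a)
      rw [map_neg, map_neg, ha]
  · -- second dual basis identity
    intro γ
    have claimB : ∀ (s : S) (v : W), ∑ j, t (s * d j) (ε (c j • v)) = s • v := by
      intro s
      refine ind _ ?_ ?_ ?_ ?_
      · intro σ u
        have h1 : ∀ j, t (s * d j) (ε (c j • t σ u)) = t (s * (d j * l (E (c j * σ)))) u := by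
          intro j
          rw [← ht2, hεt, ← ht1, mul_assoc]
        rw [Finset.sum_congr rfl fun j _ => h1 j]
        have h2 : ∑ j, t (s * (d j * l (E (c j * σ)))) u
            = t (∑ j, s * (d j * l (E (c j * σ)))) u := by
          rw [map_sum, AddMonoidHom.finset_sum_apply]
        rw [h2, ← Finset.mul_sum, hD7, ht2]
      · simp
      · intro a b ha hb
        have : ∀ j, t (s * d j) (ε (c j • (a + b)))
            = t (s * d j) (ε (c j • a)) + t (s * d j) (ε (c j • b)) := by
          intro j
          rw [smul_add, map_add, map_add]
        rw [Finset.sum_congr rfl fun j _ => this j, Finset.sum_add_distrib, ha, hb, smul_add]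
      · intro a ha
        have : ∀ j, t (s * d j) (ε (c j • (-a))) = -(t (s * d j) (ε (c j • a))) := by
          intro j
          rw [smul_neg, map_neg, map_neg]
        rw [Finset.sum_congr rfl fun j _ => this j, Finset.sum_neg_distrib, ha, smul_neg]
    refine LinearMap.ext fun v => ?_
    refine ind (fun v => (∑ j, ρ (E' (γ * X j)) * Y j) v = γ v) ?_ ?_ ?_ ?_ v
    · intro s w
      rw [LinearMap.sum_apply]
      have h1 : ∀ j : Fin n, (ρ (E' (γ * X j)) * Y j) (t s w)
          = t (s * d j) (ε (c j • γ (t 1 w))) := by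
        intro j
        rw [Module.End.mul_apply, hY, hρ]
        congr 1
        rw [hE'apply, Module.End.mul_apply, hX, one_mul, hts (c j) w, map_smul]
      rw [Finset.sum_congr rfl fun j _ => h1 j, claimB s (γ (t 1 w)), hts s w, map_smul]
    · show (∑ j, ρ (E' (γ * X j)) * Y j) (0 : W) = γ 0
      rw [map_zero, map_zero]
    · intro a b ha hb
      show (∑ j, ρ (E' (γ * X j)) * Y j) (a + b) = γ (a + b)
      rw [map_add, map_add, ha, hb]
    · intro a ha
      show (∑ j, ρ (E' (γ * X j)) * Y j) (-a) = γ (-a)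
      rw [map_neg, map_neg, ha]

end
end

section
/- Let S/R be a Frobenius extension with _R S_R centrally projective over R, and let M be a finitely generated S-module. If M ∈ add_S(S ⊗_R ω) for a finitely generated R-module ω, then the underlying R-module of M lies in add_R(ω). -/
open CategoryTheory

noncomputable section

/-- Let `S/R` be a Frobenius extension with `_R S_R` centrally
projective over `R`, and `M` a finitely generated `S`-module.  If
`M ∈ add_S(S ⊗_R ω)` for a finitely generated `R`-module `ω`, then the underlying
`R`-module of `M` (restriction along `l : R → S`) lies in `add_R ω`. -/
theorem memAdd_restrict_of_memAdd_inducedTensor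
    (R S : Type) [Ring R] [Ring S] [IsNoetherianRing R] [IsNoetherianRing Rᵐᵒᵖ]
    [IsNoetherianRing S] [IsNoetherianRing Sᵐᵒᵖ] (l : R →+* S)
    (hFrob : IsFrobeniusExtension l) (hCP : IsCentrallyProjective l)
    (ω : Type) [AddCommGroup ω] [Module R ω] [Module.Finite R ω]
    (W : Type) [AddCommGroup W] [Module S W] (t : S →+ ω →+ W)
    (hW : IsInducedTensor l ω W t)
    (M : Type) [AddCommGroup M] [Module S M] [Module.Finite S M]
    (hM : MemAdd S W M) :
    letI : Module R M := Module.compHom M l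
    MemAdd R ω M := by
  classical
  letI : Module R M := Module.compHom M l
  letI : Module R W := Module.compHom W l
  letI : Module R S := Module.compHom S l
  obtain ⟨k, iS, pS, hi1, hi2, hp1, hp2, hpi⟩ := hCP
  obtain ⟨ht1, ht2, hUP⟩ := hW
  obtain ⟨n, iM, pM, hMsplit⟩ := hM
  -- right multiplication as an R-linear endomorphism of S
  have hsmulS : ∀ (r : R) (s : S), r • s = l r * s := fun r s => rfl
  have hsmulW : ∀ (r : R) (w : W), r • w = l r • w := fun r w => rfl
  have hsmulM : ∀ (r : R) (m : M), r • m = l r • m := fun r m => rfl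
  set ρ : S → (S →ₗ[R] S) := fun s =>
    { toFun := fun s' => s' * s
      map_add' := fun a b => add_mul a b s
      map_smul' := fun r a => by simp only [hsmulS, RingHom.id_apply, mul_assoc] } with hρ
  letI : SMul S (S →ₗ[R] (Fin k → ω)) := ⟨fun s φ => φ.comp (ρ s)⟩
  have hVsmul : ∀ (s : S) (φ : S →ₗ[R] (Fin k → ω)) (s' : S), (s • φ) s' = φ (s' * s) :=
    fun s φ s' => rfl
  letI : Module S (S →ₗ[R] (Fin k → ω)) :=
    { smul := fun s φ => φ.comp (ρ s)
      one_smul := fun φ => LinearMap.ext fun s' => by rw [hVsmul, mul_one]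
      mul_smul := fun a b φ => LinearMap.ext fun s' => by
        rw [hVsmul, hVsmul, hVsmul, mul_assoc]
      smul_zero := fun a => LinearMap.ext fun s' => rfl
      smul_add := fun a φ ψ => LinearMap.ext fun s' => rfl
      add_smul := fun a b φ => LinearMap.ext fun s' => by
        rw [hVsmul, LinearMap.add_apply, hVsmul, hVsmul, mul_add, map_add]
      zero_smul := fun φ => LinearMap.ext fun s' => by
        rw [hVsmul, mul_zero, map_zero, LinearMap.zero_apply] }
  -- the bilinear map b : S →+ ω →+ V
  set binner : S → ω → (S →ₗ[R] (Fin k → ω)) := fun s m =>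
    { toFun := fun s' => fun j => iS (s' * s) j • m
      map_add' := fun a c => by
        funext j
        simp only [add_mul, map_add, Pi.add_apply, add_smul]
      map_smul' := fun r a => by
        funext j
        simp only [RingHom.id_apply, Pi.smul_apply]
        rw [hsmulS, mul_assoc, hi1, mul_smul] } with hbinner
  have binner_add_s : ∀ s₁ s₂ m, binner (s₁ + s₂) m = binner s₁ m + binner s₂ m := by
    intro s₁ s₂ m
    apply LinearMap.ext; intro s'
    funext j
    simp only [hbinner, LinearMap.coe_mk, AddHom.coe_mk, LinearMap.add_apply, Pi.add_apply]
    rw [mul_add, map_add]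
    simp [add_smul]
  have binner_add_m : ∀ s m₁ m₂, binner s (m₁ + m₂) = binner s m₁ + binner s m₂ := by
    intro s m₁ m₂
    apply LinearMap.ext; intro s'
    funext j
    simp [hbinner, smul_add]
  set b : S →+ ω →+ (S →ₗ[R] (Fin k → ω)) :=
    { toFun := fun s =>
        { toFun := fun m => binner s m
          map_zero' := by apply LinearMap.ext; intro s'; funext j; simp [hbinner]
          map_add' := binner_add_m s }
      map_zero' := by
        apply AddMonoidHom.ext; intro m
        apply LinearMap.ext; intro s'; funext j
        simp [hbinner]
      map_add' := fun s₁ s₂ => by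
        apply AddMonoidHom.ext; intro m
        exact binner_add_s s₁ s₂ m } with hb
  have hbapp : ∀ s m s' j, b s m s' j = iS (s' * s) j • m := fun _ _ _ _ => rfl
  have hbc1 : ∀ (s : S) (r : R) (m : ω), b (s * l r) m = b s (r • m) := by
    intro s r m
    apply LinearMap.ext; intro s'
    funext j
    rw [hbapp, hbapp, ← mul_assoc, hi2, mul_smul]
  have hbc2 : ∀ (s' s : S) (m : ω), b (s' * s) m = s' • b s m := by
    intro s'' s m
    apply LinearMap.ext; intro s'
    funext j
    rw [hbapp, hVsmul, hbapp, mul_assoc]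
  obtain ⟨h, hh, -⟩ := hUP (S →ₗ[R] (Fin k → ω)) b hbc1 hbc2
  -- the R-linear maps f : W → ω^k and g : ω^k → W
  let f : W →ₗ[R] (Fin k → ω) :=
    { toFun := fun w => h w 1
      map_add' := fun a c => by
        show h (a + c) 1 = h a 1 + h c 1
        rw [map_add, LinearMap.add_apply]
      map_smul' := fun r w => by
        show h (r • w) 1 = r • (h w 1)
        rw [hsmulW, map_smul, hVsmul, one_mul,
          show l r = r • (1 : S) from ((hsmulS r 1).trans (mul_one _)).symm, map_smul] }
  let g : (Fin k → ω) →ₗ[R] W :=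
    { toFun := fun v => ∑ j, t (pS (Pi.single j 1)) (v j)
      map_add' := fun a c => by
        show (∑ j, t (pS (Pi.single j 1)) ((a + c) j)) = _ + _
        simp only [Pi.add_apply, map_add]
        rw [Finset.sum_add_distrib]
      map_smul' := fun r v => by
        show (∑ j, t (pS (Pi.single j 1)) ((r • v) j)) = r • ∑ j, t (pS (Pi.single j 1)) (v j)
        rw [hsmulW, Finset.smul_sum]
        refine Finset.sum_congr rfl fun j _ => ?_
        show t (pS (Pi.single j 1)) (r • v j) = l r • t (pS (Pi.single j 1)) (v j)
        rw [← ht1, ← ht2, ← hp1, ← hp2]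
        have heq : (fun j' => (Pi.single j (1 : R) : Fin k → R) j' * r) = fun j' => r * (Pi.single j (1 : R) : Fin k → R) j' := by
          funext j'
          by_cases hjj : j' = j <;> simp [Pi.single_apply, hjj]
        rw [heq]
      }
  have hfapp : ∀ w, f w = h w 1 := fun _ => rfl
  have hgapp : ∀ v, g v = ∑ j, t (pS (Pi.single j 1)) (v j) := fun _ => rfl
  -- the key retraction identity on generators
  have key : ∀ (s : S) (m : ω), g (f (t s m)) = t s m := by
    intro s m
    rw [hfapp, hh s m]
    have hfv : (b s m 1 : Fin k → ω) = fun j => iS s j • m := by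
      funext j; rw [hbapp, one_mul]
    rw [hfv, hgapp]
    have step : ∀ j : Fin k, t (pS (Pi.single j 1)) (iS s j • m)
        = t (pS (Pi.single j (iS s j))) m := by
      intro j
      rw [← ht1, ← hp2]
      have heq : (fun j' => (Pi.single j (1 : R) : Fin k → R) j' * iS s j) = Pi.single j (iS s j) := by
        funext j'
        by_cases hjj : j' = j <;> simp [Pi.single_apply, hjj]
      rw [heq]
    calc (∑ j, t (pS (Pi.single j 1)) ((fun j => iS s j • m) j))
        = ∑ j, t (pS (Pi.single j (iS s j))) m := Finset.sum_congr rfl fun j _ => step j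
      _ = (∑ j, t (pS (Pi.single j (iS s j)))) m := by
            rw [AddMonoidHom.finset_sum_apply]
      _ = t (pS (∑ j, Pi.single j (iS s j))) m := by rw [map_sum pS, map_sum t]
      _ = t (pS (iS s)) m := by rw [Finset.univ_sum_single]
      _ = t s m := by rw [hpi]
  -- W is additively generated by the elements t s m
  let T : Set W := Set.range fun p : S × ω => t p.1 p.2
  let A : AddSubgroup W := AddSubgroup.closure T
  have hA_smul : ∀ (s : S) (w : W), w ∈ A → s • w ∈ A := by
    intro s w hw
    refine AddSubgroup.closure_induction (p := fun x _ => s • x ∈ A)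
      ?_ ?_ ?_ ?_ hw
    · rintro x ⟨⟨s', m⟩, rfl⟩
      rw [← ht2]
      exact AddSubgroup.subset_closure ⟨⟨s * s', m⟩, rfl⟩
    · show s • (0 : W) ∈ A
      rw [smul_zero]; exact A.zero_mem
    · intro x y _ _ hx hy
      show s • (x + y) ∈ A
      rw [smul_add]; exact A.add_mem hx hy
    · intro x _ hx
      show s • (-x) ∈ A
      rw [smul_neg]; exact A.neg_mem hx
  let N : Submodule S W :=
    { carrier := A
      add_mem' := fun ha hb => A.add_mem ha hb
      zero_mem' := A.zero_mem
      smul_mem' := fun s {w} hw => hA_smul s w hw }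
  have hmemN : ∀ s m, t s m ∈ N := fun s m => AddSubgroup.subset_closure ⟨⟨s, m⟩, rfl⟩
  have hNtop : N = ⊤ := by
    let b2 : S →+ ω →+ (W ⧸ N) :=
      { toFun := fun s => (N.mkQ.toAddMonoidHom).comp (t s)
        map_zero' := by apply AddMonoidHom.ext; intro m; simp
        map_add' := fun s₁ s₂ => by apply AddMonoidHom.ext; intro m; simp }
    have hb2app : ∀ s m, b2 s m = N.mkQ (t s m) := fun _ _ => rfl
    have hb2c1 : ∀ (s : S) (r : R) (m : ω), b2 (s * l r) m = b2 s (r • m) := by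
      intro s r m; rw [hb2app, hb2app, ht1]
    have hb2c2 : ∀ (s' s : S) (m : ω), b2 (s' * s) m = s' • b2 s m := by
      intro s' s m; rw [hb2app, hb2app, ht2, map_smul]
    obtain ⟨h2, -, huniq⟩ := hUP (W ⧸ N) b2 hb2c1 hb2c2
    have e1 : N.mkQ = h2 := huniq N.mkQ fun s m => rfl
    have e2 : (0 : W →ₗ[S] W ⧸ N) = h2 := by
      refine huniq 0 fun s m => ?_
      rw [LinearMap.zero_apply, hb2app, eq_comm, Submodule.mkQ_apply,
        Submodule.Quotient.mk_eq_zero]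
      exact hmemN s m
    have e3 : N.mkQ = (0 : W →ₗ[S] W ⧸ N) := e1.trans e2.symm
    rw [← Submodule.ker_mkQ N, e3, LinearMap.ker_zero]
  have hgf : ∀ w : W, g (f w) = w := by
    intro w
    have hwA : w ∈ A := by
      have : w ∈ N := hNtop ▸ Submodule.mem_top
      exact this
    refine AddSubgroup.closure_induction (p := fun x _ => g (f x) = x) ?_ ?_ ?_ ?_ hwA
    · rintro x ⟨⟨s, m⟩, rfl⟩; exact key s m
    · show g (f (0 : W)) = 0
      rw [map_zero, map_zero]
    · intro x y _ _ hx hy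
      show g (f (x + y)) = x + y
      rw [map_add, map_add, hx, hy]
    · intro x _ hx
      show g (f (-x)) = -x
      rw [map_neg, map_neg, hx]
  -- assemble the splitting for M over R
  let iM' : M →ₗ[R] (Fin n → W) :=
    { toFun := iM
      map_add' := iM.map_add
      map_smul' := fun r x => iM.map_smul (l r) x }
  let pM' : (Fin n → W) →ₗ[R] M :=
    { toFun := pM
      map_add' := pM.map_add
      map_smul' := fun r x => pM.map_smul (l r) x }
  let fn : (Fin n → W) →ₗ[R] (Fin n → Fin k → ω) :=
    LinearMap.pi (fun a => f.comp (LinearMap.proj a))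
  let gn : (Fin n → Fin k → ω) →ₗ[R] (Fin n → W) :=
    LinearMap.pi (fun a => g.comp (LinearMap.proj a))
  let cur : (Fin n × Fin k → ω) ≃ₗ[R] (Fin n → Fin k → ω) :=
    { toFun := fun v a c => v (a, c)
      invFun := fun v p => v p.1 p.2
      map_add' := fun _ _ => rfl
      map_smul' := fun _ _ => rfl
      left_inv := fun v => rfl
      right_inv := fun v => rfl }
  let fin : (Fin (n * k) → ω) ≃ₗ[R] (Fin n × Fin k → ω) :=
    LinearEquiv.funCongrLeft R ω finProdFinEquiv
  refine ⟨n * k, (fin.symm.toLinearMap.comp (cur.symm.toLinearMap.comp (fn.comp iM'))),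
    (pM'.comp (gn.comp (cur.toLinearMap.comp fin.toLinearMap))), fun x => ?_⟩
  show pM' (gn (cur (fin (fin.symm (cur.symm (fn (iM' x))))))) = x
  rw [LinearEquiv.apply_symm_apply, LinearEquiv.apply_symm_apply]
  have hgnfn : gn (fn (iM' x)) = iM' x := by
    funext a
    exact hgf (iM' x a)
  rw [hgnfn]
  exact hMsplit x

end
end

section
/- Let S/R be a Frobenius extension with _R S_R centrally projective over R, ω a finitely generated R-module with fadim_R(ω) ≥ n+2 and Ext^i_R(ω,ω)=0 for 1 ≤ i ≤ n. If M is an ω-n-torsionfree finitely generated R-module, then S ⊗_R M is (S ⊗_R ω)-n-torsionfree as an S-module. -/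
open CategoryTheory

noncomputable section

section Helpers

variable {A : Type} [Ring A]

/-- Componentwise action of a linear map on `Fin m → X`. -/
def piMapL {X Y : Type} [AddCommGroup X] [Module A X] [AddCommGroup Y] [Module A Y]
    (f : X →ₗ[A] Y) (m : ℕ) : (Fin m → X) →ₗ[A] (Fin m → Y) where
  toFun v := fun j => f (v j)
  map_add' v w := by funext j; simp
  map_smul' a v := by funext j; simp

variable {ω ω' X Y : Type} [AddCommGroup ω] [Module A ω] [AddCommGroup ω'] [Module A ω']
  [AddCommGroup X] [Module A X] [AddCommGroup Y] [Module A Y]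

lemma memAdd_self (m : ℕ) : MemAdd A ω (Fin m → ω) :=
  ⟨m, LinearMap.id, LinearMap.id, fun _ => rfl⟩

lemma memAdd_congr (e : X ≃ₗ[A] Y) (h : MemAdd A ω X) : MemAdd A ω Y := by
  obtain ⟨n, i, p, hpi⟩ := h
  exact ⟨n, i.comp e.symm.toLinearMap, e.toLinearMap.comp p, fun y => by simp [hpi]⟩

lemma memAdd_omega_congr (e : ω ≃ₗ[A] ω') (h : MemAdd A ω X) : MemAdd A ω' X := by
  obtain ⟨n, i, p, hpi⟩ := h
  refine ⟨n, (piMapL e.toLinearMap n).comp i, p.comp (piMapL e.symm.toLinearMap n), fun x => by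
    simp [piMapL]
    convert hpi x using 2⟩

lemma memAdd_pi (m : ℕ) (h : MemAdd A ω Y) : MemAdd A ω (Fin m → Y) := by
  obtain ⟨n, i, p, hpi⟩ := h
  refine ⟨m * n, ?_, ?_, ?_⟩
  · exact { toFun := fun v c => i (v (finProdFinEquiv.symm c).1) (finProdFinEquiv.symm c).2
            map_add' := fun v w => by funext c; simp
            map_smul' := fun a v => by funext c; simp }
  · exact { toFun := fun v j => p (fun b => v (finProdFinEquiv (j, b)))
            map_add' := fun v w => by
              funext j
              show p _ = p _ + p _
              rw [← map_add]; rfl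
            map_smul' := fun a v => by
              funext j
              show p _ = a • p _
              rw [← map_smul]; rfl }
  · intro v; funext j
    simp only [LinearMap.coe_mk, AddHom.coe_mk]
    have : (fun b => i (v (finProdFinEquiv.symm (finProdFinEquiv (j, b))).1)
        (finProdFinEquiv.symm (finProdFinEquiv (j, b))).2) = i (v j) := by
      funext b; rw [Equiv.symm_apply_apply]
    rw [this, hpi]

lemma memAdd_trans (h1 : MemAdd A Y X) (h2 : MemAdd A ω Y) : MemAdd A ω X := by
  obtain ⟨m, i1, p1, hpi1⟩ := h1
  obtain ⟨N, i2, p2, hpi2⟩ := memAdd_pi (ω := ω) m h2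
  exact ⟨N, i2.comp i1, p1.comp p2, fun x => by simp [hpi2, hpi1]⟩

end Helpers




section CP

variable {R S : Type} [Ring R] [Ring S]

structure CPData (l : R →+* S) (k : ℕ) where
  i : S →+ (Fin k → R)
  p : (Fin k → R) →+ S
  hi1 : ∀ r s, i (l r * s) = fun j => r * i s j
  hi2 : ∀ s r, i (s * l r) = fun j => i s j * r
  hp1 : ∀ r v, p (fun j => r * v j) = l r * p v
  hp2 : ∀ (v : Fin k → R) r, p (fun j => v j * r) = p v * l r
  hpi : ∀ s, p (i s) = s

variable {l : R →+* S} {k : ℕ} (d : CPData l k)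

/-- The matrix of left multiplication by `σ` on `S ⊆ R^k`. -/
def CPData.D (σ : S) (a b : Fin k) : R := d.i (σ * d.p (Pi.single b 1)) a

/-- The idempotent matrix cutting out `S` inside `R^k`. -/
def CPData.C (a b : Fin k) : R := d.D 1 a b

lemma CPData.C_eq (a b : Fin k) : d.C a b = d.i (d.p (Pi.single b 1)) a := by
  simp [CPData.C, CPData.D]

lemma CPData.psum (v : Fin k → R) : d.p v = ∑ c, d.p (Pi.single c 1) * l (v c) := by
  conv_lhs => rw [← Finset.univ_sum_single v, map_sum]
  refine Finset.sum_congr rfl fun c _ => ?_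
  rw [← d.hp2 (Pi.single c 1) (v c)]
  congr 1
  funext j
  by_cases h : j = c <;> simp [Pi.single_apply, h]

lemma CPData.Dsum (σ : S) (a : Fin k) (v : Fin k → R) :
    ∑ c, d.D σ a c * v c = d.i (σ * d.p v) a := by
  conv_rhs => rw [d.psum v]
  rw [Finset.mul_sum, map_sum]
  rw [Finset.sum_apply]
  refine Finset.sum_congr rfl fun c _ => ?_
  rw [← mul_assoc, d.hi2]
  rfl

lemma CPData.Dmul (σ τ : S) (a b : Fin k) :
    ∑ c, d.D σ a c * d.D τ c b = d.D (σ * τ) a b := by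
  rw [d.Dsum σ a fun c => d.D τ c b]
  show d.i (σ * d.p (d.i (τ * d.p (Pi.single b 1)))) a = _
  rw [d.hpi, CPData.D, mul_assoc]

lemma CPData.iD (σ : S) (s : S) (a : Fin k) :
    ∑ c, d.D σ a c * d.i s c = d.i (σ * s) a := by
  rw [d.Dsum σ a (d.i s), d.hpi]

lemma CPData.C_central (a b : Fin k) (r : R) : d.C a b * r = r * d.C a b := by
  have h1 : (fun j => (Pi.single b (1 : R) : Fin k → R) j * r) = Pi.single b r := by
    funext j
    by_cases h : j = b
    · subst h; simp
    · simp [Pi.single_eq_of_ne h]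
  have h2 : (fun j => r * (Pi.single b (1 : R) : Fin k → R) j) = Pi.single b r := by
    funext j
    by_cases h : j = b
    · subst h; simp
    · simp [Pi.single_eq_of_ne h]
  have e1 := congrFun (d.hi2 (d.p (Pi.single b 1)) r) a
  have e2 := congrFun (d.hi1 r (d.p (Pi.single b 1))) a
  rw [d.C_eq, ← e1, ← e2, ← d.hp2, ← d.hp1, h1, h2]

lemma CPData.D_add (σ τ : S) : d.D (σ + τ) = fun a b => d.D σ a b + d.D τ a b := by
  funext a b
  simp only [CPData.D, add_mul, map_add]
  rfl

lemma CPData.D_zero : d.D 0 = fun _ _ => 0 := by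
  funext a b; simp [CPData.D]

lemma CPData.D_lsmul (r : R) (a b : Fin k) : d.D (l r) a b = r * d.C a b := by
  rw [CPData.D, d.hi1 r (d.p (Pi.single b 1)), d.C_eq]

section Model

variable (M : Type) [AddCommGroup M] [Module R M]

/-- The fixed points of the idempotent `C`-action on `M^k`: a concrete model
for `S ⊗_R M`. -/
def CPData.fix : AddSubgroup (Fin k → M) where
  carrier := {m | ∀ a, ∑ b, d.C a b • m b = m a}
  add_mem' := fun {x y} hx hy => by
    intro a
    simp only [Pi.add_apply, smul_add, Finset.sum_add_distrib, hx a, hy a]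
  zero_mem' := by intro a; simp
  neg_mem' := fun {x} hx => by
    intro a
    simp only [Pi.neg_apply, smul_neg, Finset.sum_neg_distrib, hx a]

def CPData.Ind : Type := d.fix M

instance : AddCommGroup (d.Ind M) := inferInstanceAs (AddCommGroup (d.fix M))

variable {M}

lemma CPData.Dact_mem (σ : S) (m : Fin k → M) :
    (fun a => ∑ b, d.D σ a b • m b) ∈ d.fix M := by
  intro a
  calc ∑ b, d.C a b • ∑ c, d.D σ b c • m c
      = ∑ b, ∑ c, (d.C a b * d.D σ b c) • m c := by
        refine Finset.sum_congr rfl fun b _ => ?_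
        rw [Finset.smul_sum]
        exact Finset.sum_congr rfl fun c _ => smul_smul _ _ _
    _ = ∑ c, (∑ b, d.C a b * d.D σ b c) • m c := by
        rw [Finset.sum_comm]
        exact Finset.sum_congr rfl fun c _ => (Finset.sum_smul).symm
    _ = ∑ c, d.D σ a c • m c := by
        refine Finset.sum_congr rfl fun c _ => ?_
        congr 1
        have h := d.Dmul 1 σ a c
        rw [one_mul] at h
        exact h

instance : SMul S (d.Ind M) where
  smul σ m := ⟨fun a => ∑ b, d.D σ a b • m.1 b, d.Dact_mem σ m.1⟩

lemma CPData.smul_coe (σ : S) (m : d.Ind M) :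
    (σ • m).1 = fun a => ∑ b, d.D σ a b • m.1 b := rfl

instance : Module S (d.Ind M) where
  one_smul m := by
    apply Subtype.ext
    funext a
    show ∑ b, d.D 1 a b • m.1 b = m.1 a
    exact m.2 a
  mul_smul σ τ m := by
    apply Subtype.ext
    funext a
    show ∑ b, d.D (σ * τ) a b • m.1 b = ∑ b, d.D σ a b • (∑ c, d.D τ b c • m.1 c)
    calc ∑ b, d.D (σ * τ) a b • m.1 b
        = ∑ b, (∑ c, d.D σ a c * d.D τ c b) • m.1 b := by
          refine Finset.sum_congr rfl fun b _ => ?_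
          rw [d.Dmul]
      _ = ∑ b, ∑ c, d.D σ a c • (d.D τ c b • m.1 b) := by
          refine Finset.sum_congr rfl fun b _ => ?_
          rw [Finset.sum_smul]
          exact Finset.sum_congr rfl fun c _ => (smul_smul _ _ _).symm
      _ = ∑ c, d.D σ a c • (∑ b, d.D τ c b • m.1 b) := by
          rw [Finset.sum_comm]
          exact Finset.sum_congr rfl fun c _ => (Finset.smul_sum).symm
  smul_zero σ := by
    apply Subtype.ext
    funext a
    show ∑ b, d.D σ a b • (0 : Fin k → M) b = 0
    simp
  smul_add σ m m' := by
    apply Subtype.ext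
    funext a
    show ∑ b, d.D σ a b • (m.1 + m'.1) b = (∑ b, d.D σ a b • m.1 b) + ∑ b, d.D σ a b • m'.1 b
    simp [smul_add, Finset.sum_add_distrib]
  add_smul σ τ m := by
    apply Subtype.ext
    funext a
    show ∑ b, d.D (σ + τ) a b • m.1 b = (∑ b, d.D σ a b • m.1 b) + ∑ b, d.D τ a b • m.1 b
    rw [d.D_add]
    simp [add_smul, Finset.sum_add_distrib]
  zero_smul m := by
    apply Subtype.ext
    funext a
    show ∑ b, d.D 0 a b • m.1 b = 0
    rw [d.D_zero]
    simp

lemma CPData.lsmul_coe (r : R) (m : d.Ind M) :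
    (((l r) • m : d.Ind M)).1 = fun a => r • m.1 a := by
  funext a
  show ∑ b, d.D (l r) a b • m.1 b = r • m.1 a
  calc ∑ b, d.D (l r) a b • m.1 b = ∑ b, r • (d.C a b • m.1 b) := by
        refine Finset.sum_congr rfl fun b _ => ?_
        rw [d.D_lsmul, mul_smul]
    _ = r • m.1 a := by rw [← Finset.smul_sum, m.2 a]

lemma CPData.iC (s : S) (a : Fin k) : ∑ b, d.C a b * d.i s b = d.i s a := by
  have h := d.iD 1 s a
  rw [one_mul] at h
  exact h

variable {M : Type} [AddCommGroup M] [Module R M]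

lemma CPData.indT_mem (s : S) (m : M) : (fun a => d.i s a • m) ∈ d.fix M := by
  intro a
  calc ∑ b, d.C a b • d.i s b • m = ∑ b, (d.C a b * d.i s b) • m := by
        exact Finset.sum_congr rfl fun b _ => smul_smul _ _ _
    _ = d.i s a • m := by rw [← Finset.sum_smul, d.iC]

/-- The structure map `s ⊗ m` of the concrete model. -/
def CPData.indT : S →+ M →+ d.Ind M :=
  AddMonoidHom.mk' (fun s => AddMonoidHom.mk'
    (fun m => (⟨fun a => d.i s a • m, d.indT_mem s m⟩ : d.Ind M))
    (fun m m' => by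
      apply Subtype.ext
      show (fun a => d.i s a • (m + m')) = (fun a => d.i s a • m) + (fun a => d.i s a • m')
      funext a
      simp [smul_add]))
    (fun s s' => by
      ext m
      apply Subtype.ext
      show (fun a => d.i (s + s') a • m) = (fun a => d.i s a • m) + (fun a => d.i s' a • m)
      funext a
      rw [map_add]
      simp [add_smul])

lemma CPData.indT_coe (s : S) (m : M) : (d.indT s m : d.Ind M).1 = fun a => d.i s a • m := rfl

lemma CPData.indT_balanced (s : S) (r : R) (m : M) :
    d.indT (s * l r) m = d.indT s (r • m) := by
  apply Subtype.ext
  funext a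
  show d.i (s * l r) a • m = d.i s a • (r • m)
  rw [d.hi2, smul_smul]

lemma CPData.indT_equivariant (σ s : S) (m : M) :
    d.indT (σ * s) m = σ • d.indT s m := by
  apply Subtype.ext
  funext a
  show d.i (σ * s) a • m = ∑ b, d.D σ a b • (d.i s b • m)
  calc d.i (σ * s) a • m = (∑ b, d.D σ a b * d.i s b) • m := by rw [d.iD]
    _ = ∑ b, d.D σ a b • (d.i s b • m) := by
        rw [Finset.sum_smul]
        exact Finset.sum_congr rfl fun b _ => (smul_smul _ _ _).symm

lemma CPData.ind_span (w : d.Ind M) :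
    w = ∑ a, d.indT (d.p (Pi.single a 1)) (w.1 a) := by
  apply Subtype.ext
  have hcoe : (∑ a, d.indT (d.p (Pi.single a 1)) (w.1 a) : d.Ind M).1
      = ∑ a, (d.indT (d.p (Pi.single a 1)) (w.1 a)).1 :=
    AddSubmonoidClass.coe_finset_sum _ _
  rw [hcoe]
  funext j
  rw [Finset.sum_apply]
  simp only [CPData.indT_coe]
  calc w.1 j = ∑ a, d.C j a • w.1 a := (w.2 j).symm
    _ = ∑ a, d.i (d.p (Pi.single a 1)) j • w.1 a := by
        refine Finset.sum_congr rfl fun a _ => ?_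
        rw [d.C_eq]

theorem CPData.indT_isInducedTensor : IsInducedTensor l M (d.Ind M) d.indT := by
  refine ⟨fun s r m => d.indT_balanced s r m, fun σ s m => d.indT_equivariant σ s m, ?_⟩
  intro V _ _ b hb1 hb2
  refine ⟨{ toFun := fun w => ∑ a, b (d.p (Pi.single a 1)) (w.1 a)
            map_add' := fun w w' => by
              have h : (w + w').1 = w.1 + w'.1 := rfl
              simp only [h, Pi.add_apply, map_add, Finset.sum_add_distrib]
            map_smul' := fun σ w => by
              show ∑ a, b (d.p (Pi.single a 1)) ((σ • w).1 a) = σ • ∑ a, b (d.p (Pi.single a 1)) (w.1 a)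
              rw [d.smul_coe, Finset.smul_sum]
              calc ∑ a, b (d.p (Pi.single a 1)) (∑ c, d.D σ a c • w.1 c)
                  = ∑ a, ∑ c, b (d.p (Pi.single a 1) * l (d.D σ a c)) (w.1 c) := by
                    refine Finset.sum_congr rfl fun a _ => ?_
                    rw [map_sum]
                    exact Finset.sum_congr rfl fun c _ => by rw [hb1]
                _ = ∑ c, b (∑ a, d.p (Pi.single a 1) * l (d.D σ a c)) (w.1 c) := by
                    rw [Finset.sum_comm]
                    refine Finset.sum_congr rfl fun c _ => ?_
                    rw [map_sum, AddMonoidHom.finset_sum_apply]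
                _ = ∑ c, b (σ * d.p (Pi.single c 1)) (w.1 c) := by
                    refine Finset.sum_congr rfl fun c _ => ?_
                    have hkey : ∑ a, d.p (Pi.single a 1) * l (d.i (σ * d.p (Pi.single c 1)) a)
                        = σ * d.p (Pi.single c 1) := by
                      rw [← d.psum, d.hpi]
                    exact congrArg (fun z => b z (w.1 c)) hkey
                _ = ∑ c, σ • b (d.p (Pi.single c 1)) (w.1 c) := by
                    exact Finset.sum_congr rfl fun c _ => hb2 σ _ _ }, ?_, ?_⟩
  · intro s m
    show ∑ a, b (d.p (Pi.single a 1)) (d.i s a • m) = b s m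
    calc ∑ a, b (d.p (Pi.single a 1)) (d.i s a • m)
        = ∑ a, b (d.p (Pi.single a 1) * l (d.i s a)) m := by
          exact Finset.sum_congr rfl fun a _ => (hb1 _ _ _).symm
      _ = b (∑ a, d.p (Pi.single a 1) * l (d.i s a)) m := by
          rw [map_sum, AddMonoidHom.finset_sum_apply]
      _ = b s m := by rw [← d.psum (d.i s), d.hpi]
  · intro y hy
    apply LinearMap.ext
    intro w
    rw [d.ind_span w, map_sum, map_sum]
    refine Finset.sum_congr rfl fun a _ => ?_
    rw [hy]
    show _ = ∑ a', b (d.p (Pi.single a' 1)) ((d.indT (d.p (Pi.single a 1)) (w.1 a)).1 a')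
    calc b (d.p (Pi.single a 1)) (w.1 a)
        = ∑ a', b (d.p (Pi.single a' 1)) (d.i (d.p (Pi.single a 1)) a' • w.1 a) := by
          rw [show ∑ a', b (d.p (Pi.single a' 1)) (d.i (d.p (Pi.single a 1)) a' • w.1 a)
              = ∑ a', b (d.p (Pi.single a' 1) * l (d.i (d.p (Pi.single a 1)) a')) (w.1 a) from
            Finset.sum_congr rfl fun a' _ => (hb1 _ _ _).symm]
          rw [show (∑ a', b (d.p (Pi.single a' 1) * l (d.i (d.p (Pi.single a 1)) a')) (w.1 a) : V)
              = b (∑ a', d.p (Pi.single a' 1) * l (d.i (d.p (Pi.single a 1)) a')) (w.1 a) from by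
            rw [map_sum, AddMonoidHom.finset_sum_apply]]
          rw [← d.psum, d.hpi]
      _ = ∑ a', b (d.p (Pi.single a' 1)) ((d.indT (d.p (Pi.single a 1)) (w.1 a)).1 a') := rfl

section Functor

variable {N : Type} [AddCommGroup N] [Module R N]

lemma CPData.indMap_mem (f : M →ₗ[R] N) (w : d.Ind M) :
    (fun a => f (w.1 a)) ∈ d.fix N := by
  intro a
  calc ∑ b, d.C a b • f (w.1 b) = f (∑ b, d.C a b • w.1 b) := by
        rw [map_sum]
        exact Finset.sum_congr rfl fun b _ => (map_smul f _ _).symm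
    _ = f (w.1 a) := by rw [w.2 a]

/-- Functoriality of the concrete induced module. -/
def CPData.indMap (f : M →ₗ[R] N) : d.Ind M →ₗ[S] d.Ind N where
  toFun w := ⟨fun a => f (w.1 a), d.indMap_mem f w⟩
  map_add' w w' := by
    apply Subtype.ext
    have h : (w + w').1 = w.1 + w'.1 := rfl
    funext a
    show f ((w + w').1 a) = f (w.1 a) + f (w'.1 a)
    rw [h]
    simp
  map_smul' σ w := by
    apply Subtype.ext
    funext a
    show f ((σ • w).1 a) = ∑ b, d.D σ a b • f (w.1 b)
    rw [d.smul_coe, map_sum]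
    exact Finset.sum_congr rfl fun b _ => map_smul f _ _

lemma CPData.indMap_coe (f : M →ₗ[R] N) (w : d.Ind M) :
    (d.indMap f w).1 = fun a => f (w.1 a) := rfl

lemma CPData.indMap_indT (f : M →ₗ[R] N) (s : S) (m : M) :
    d.indMap f (d.indT s m) = d.indT s (f m) := by
  apply Subtype.ext
  funext a
  show f (d.i s a • m) = d.i s a • f m
  exact map_smul f _ _

lemma CPData.indMap_injective {f : M →ₗ[R] N} (hf : Function.Injective f) :
    Function.Injective (d.indMap f) := by
  intro w w' h
  apply Subtype.ext
  funext a
  exact hf (congrFun (congrArg Subtype.val h) a)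

lemma CPData.indMap_surjective {f : M →ₗ[R] N} (hf : Function.Surjective f) :
    Function.Surjective (d.indMap f) := by
  intro w
  choose g hg using hf
  refine ⟨⟨fun a => ∑ b, d.C a b • g (w.1 b), d.Dact_mem 1 _⟩, ?_⟩
  apply Subtype.ext
  funext a
  show f (∑ b, d.C a b • g (w.1 b)) = w.1 a
  rw [map_sum]
  calc ∑ b, f (d.C a b • g (w.1 b)) = ∑ b, d.C a b • w.1 b := by
        refine Finset.sum_congr rfl fun b _ => ?_
        rw [map_smul, hg]
    _ = w.1 a := w.2 a

lemma CPData.indMap_id_apply (w : d.Ind M) : d.indMap (LinearMap.id : M →ₗ[R] M) w = w := by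
  apply Subtype.ext
  funext a
  rfl

lemma CPData.indMap_comp_apply {P : Type} [AddCommGroup P] [Module R P]
    (f : M →ₗ[R] N) (g : N →ₗ[R] P) (w : d.Ind M) :
    d.indMap g (d.indMap f w) = d.indMap (g.comp f) w := by
  apply Subtype.ext
  funext a
  rfl

/-- The concrete induced module of a finite power. -/
def CPData.indPi (m : ℕ) : d.Ind (Fin m → M) ≃ₗ[S] (Fin m → d.Ind M) where
  toFun w := fun j => ⟨fun a => w.1 a j, by
    intro a
    have h := congrFun (w.2 a) j
    rw [Finset.sum_apply] at h
    calc ∑ b, d.C a b • w.1 b j = ∑ b, (d.C a b • w.1 b) j := rfl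
      _ = w.1 a j := h⟩
  invFun v := ⟨fun a j => (v j).1 a, by
    intro a
    funext j
    have h := (v j).2 a
    calc (∑ b, d.C a b • fun j' => (v j').1 b) j = ∑ b, d.C a b • (v j).1 b := by
          rw [Finset.sum_apply]
          rfl
      _ = (v j).1 a := h⟩
  map_add' w w' := by
    funext j
    apply Subtype.ext
    funext a
    have h : (w + w').1 = w.1 + w'.1 := rfl
    show (w + w').1 a j = w.1 a j + w'.1 a j
    rw [h]
    rfl
  map_smul' σ w := by
    funext j
    apply Subtype.ext
    funext a
    show (σ • w).1 a j = ∑ b, d.D σ a b • w.1 b j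
    rw [d.smul_coe]
    show (∑ b, d.D σ a b • w.1 b) j = _
    rw [Finset.sum_apply]
    rfl
  left_inv w := by
    apply Subtype.ext
    funext a
    rfl
  right_inv v := by
    funext j
    apply Subtype.ext
    funext a
    rfl

lemma CPData.memAdd_ind {ω : Type} [AddCommGroup ω] [Module R ω]
    (h : MemAdd R ω M) : MemAdd S (d.Ind ω) (d.Ind M) := by
  obtain ⟨m, i0, p0, hpi0⟩ := h
  have h1 : MemAdd S (d.Ind (Fin m → ω)) (d.Ind M) := by
    refine ⟨1, ?_, ?_, ?_⟩
    · exact { toFun := fun w _ => d.indMap i0 w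
              map_add' := fun w w' => by funext j; simp
              map_smul' := fun σ w => by funext j; simp }
    · exact { toFun := fun v => d.indMap p0 (v 0)
              map_add' := fun v v' => by simp
              map_smul' := fun σ v => by simp }
    · intro w
      simp only [LinearMap.coe_mk, AddHom.coe_mk]
      rw [d.indMap_comp_apply]
      rw [show p0.comp i0 = LinearMap.id from LinearMap.ext fun x => hpi0 x]
      exact d.indMap_id_apply w
  have h2 : MemAdd S (d.Ind ω) (d.Ind (Fin m → ω)) :=
    memAdd_congr (d.indPi (M := ω) m).symm (memAdd_self m)
  exact memAdd_trans h1 h2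

end Functor

end Model



/-- Projection of `M^k` onto the model. -/
def CPData.proj {M : Type} [AddCommGroup M] [Module R M] (v : Fin k → M) : d.Ind M :=
  ⟨fun a => ∑ b, d.C a b • v b, d.Dact_mem 1 v⟩

lemma CPData.proj_coe {M : Type} [AddCommGroup M] [Module R M] (v : Fin k → M) :
    (d.proj v).1 = fun a => ∑ b, d.C a b • v b := rfl

lemma CPData.proj_add {M : Type} [AddCommGroup M] [Module R M] (v v' : Fin k → M) :
    d.proj (v + v') = d.proj v + d.proj v' := by
  apply Subtype.ext
  show (d.proj (v + v')).1 = (d.proj v).1 + (d.proj v').1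
  rw [d.proj_coe, d.proj_coe, d.proj_coe]
  funext a
  simp [smul_add, Finset.sum_add_distrib]

lemma CPData.proj_rsmul {M : Type} [AddCommGroup M] [Module R M] (r : R) (v : Fin k → M) :
    d.proj (r • v) = l r • d.proj v := by
  apply Subtype.ext
  rw [d.lsmul_coe]
  rw [d.proj_coe]
  funext a
  calc ∑ b, d.C a b • (r • v) b = ∑ b, r • (d.C a b • v b) := by
        refine Finset.sum_congr rfl fun b _ => ?_
        show d.C a b • (r • v b) = r • (d.C a b • v b)
        rw [smul_smul, d.C_central, ← smul_smul]
    _ = r • (d.proj v).1 a := by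
        rw [← Finset.smul_sum]
        rfl

section Restrict

/-- Restriction of scalars along `l` as a type synonym. -/
def Res (l : R →+* S) (Z : Type) : Type := Z

/-- Forget the synonym. -/
def Res.out {l : R →+* S} {Z : Type} (z : Res l Z) : Z := z

/-- Put on the synonym. -/
def Res.mk (l : R →+* S) {Z : Type} (z : Z) : Res l Z := z

instance (Z : Type) [AddCommGroup Z] : AddCommGroup (Res l Z) :=
  inferInstanceAs (AddCommGroup Z)

instance (Z : Type) [AddCommGroup Z] [Module S Z] : Module R (Res l Z) :=
  Module.compHom Z l

lemma res_smul_out {Z : Type} [AddCommGroup Z] [Module S Z] (r : R) (z : Res l Z) :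
    (r • z).out = l r • z.out := rfl

lemma res_add_out {Z : Type} [AddCommGroup Z] (z z' : Res l Z) :
    (z + z').out = z.out + z'.out := rfl

/-- An `S`-linear map is `R`-linear for the restricted structures. -/
def resMap {Z Z' : Type} [AddCommGroup Z] [Module S Z] [AddCommGroup Z'] [Module S Z']
    (g : Z →ₗ[S] Z') : Res l Z →ₗ[R] Res l Z' where
  toFun z := Res.mk l (g z.out)
  map_add' z z' := g.map_add _ _
  map_smul' r z := g.map_smul (l r) z.out

variable {ω : Type} [AddCommGroup ω] [Module R ω]

/-- The inclusion of the model `Ind ω` into `ω^k`, `R`-linearly. -/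
def CPData.resIncl : Res l (d.Ind ω) →ₗ[R] (Fin k → ω) where
  toFun w := w.out.1
  map_add' w w' := rfl
  map_smul' r w := by
    show ((l r • w.out : d.Ind ω)).1 = r • w.out.1
    rw [d.lsmul_coe]
    rfl

/-- The `R`-linear retraction of `ω^k` onto the model `Ind ω`. -/
def CPData.resRetr : (Fin k → ω) →ₗ[R] Res l (d.Ind ω) where
  toFun v := Res.mk l (d.proj v)
  map_add' v v' := d.proj_add v v'
  map_smul' r v := d.proj_rsmul r v

lemma CPData.resRetr_incl (w : Res l (d.Ind ω)) : d.resRetr (d.resIncl w) = w := by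
  apply Subtype.ext
  funext a
  exact w.out.2 a

lemma CPData.memAdd_res {Z : Type} [AddCommGroup Z] [Module S Z]
    (h : MemAdd S (d.Ind ω) Z) : MemAdd R ω (Res l Z) := by
  obtain ⟨m, i0, p0, h0⟩ := h
  have step1 : MemAdd R (Res l (d.Ind ω)) (Res l Z) := by
    refine ⟨m, ?_, ?_, ?_⟩
    · exact { toFun := fun z j => Res.mk l (i0 z.out j)
              map_add' := fun z z' => by
                funext j
                show Res.mk l (i0 (z.out + z'.out) j) = _
                rw [map_add]
                rfl
              map_smul' := fun r z => by
                funext j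
                show Res.mk l (i0 (l r • z.out) j) = _
                rw [map_smul]
                rfl }
    · exact { toFun := fun v => Res.mk l (p0 (fun j => (v j).out))
              map_add' := fun v v' => by
                show Res.mk l (p0 ((fun j => (v j).out) + fun j => (v' j).out)) = _
                rw [map_add]
                rfl
              map_smul' := fun r v => by
                show Res.mk l (p0 (l r • fun j => (v j).out)) = _
                rw [map_smul]
                rfl }
    · intro z
      show Res.mk l (p0 (i0 z.out)) = z
      rw [h0]
      rfl
  have step2 : MemAdd R ω (Res l (d.Ind ω)) := ⟨k, d.resIncl, d.resRetr, d.resRetr_incl⟩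
  exact memAdd_trans step1 step2

end Restrict

section Abstract

/-- Build a biadditive map from a two-variable function. -/
def mkBiAdd {M Z : Type} [AddCommGroup M] [AddCommGroup Z] (f : S → M → Z)
    (h1 : ∀ s s' m, f (s + s') m = f s m + f s' m)
    (h2 : ∀ s m m', f s (m + m') = f s m + f s m') : S →+ M →+ Z :=
  AddMonoidHom.mk' (fun s => AddMonoidHom.mk' (f s) (h2 s))
    (fun s s' => AddMonoidHom.ext fun m => h1 s s' m)

variable {M V V' Z : Type} [AddCommGroup M] [Module R M] [AddCommGroup V] [Module S V]
  [AddCommGroup V'] [Module S V'] [AddCommGroup Z] [Module S Z]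

lemma inducedTensor_ext {u : S →+ M →+ V} (hV : IsInducedTensor l M V u)
    {g₁ g₂ : V →ₗ[S] Z} (h : ∀ s m, g₁ (u s m) = g₂ (u s m)) : g₁ = g₂ := by
  obtain ⟨hb, he, hup⟩ := hV
  obtain ⟨h0, hh0, huniq⟩ := hup Z
    (mkBiAdd (fun s m => g₁ (u s m))
      (fun s s' m => by
        show g₁ (u (s + s') m) = g₁ (u s m) + g₁ (u s' m)
        rw [map_add, AddMonoidHom.add_apply, map_add])
      (fun s m m' => by
        show g₁ (u s (m + m')) = g₁ (u s m) + g₁ (u s m')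
        rw [map_add, map_add]))
    (fun s r m => congrArg g₁ (hb s r m))
    (fun σ s m => by show g₁ (u (σ * s) m) = σ • g₁ (u s m); rw [he, map_smul])
  have e1 := huniq g₁ (fun s m => rfl)
  have e2 := huniq g₂ (fun s m => (h s m).symm)
  rw [e1, e2]

lemma inducedTensor_unique {u : S →+ M →+ V} {u' : S →+ M →+ V'}
    (h1 : IsInducedTensor l M V u) (h2 : IsInducedTensor l M V' u') :
    ∃ e : V ≃ₗ[S] V', ∀ s m, e (u s m) = u' s m := by
  obtain ⟨hb, he, hup⟩ := h1
  obtain ⟨hb', he', hup'⟩ := h2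
  obtain ⟨f, hf, -⟩ := hup V' u' hb' he'
  obtain ⟨g, hg, -⟩ := hup' V u hb he
  have hfg : f.comp g = LinearMap.id :=
    inducedTensor_ext ⟨hb', he', hup'⟩ (fun s m => by
      rw [LinearMap.comp_apply, hg, hf, LinearMap.id_apply])
  have hgf : g.comp f = LinearMap.id :=
    inducedTensor_ext ⟨hb, he, hup⟩ (fun s m => by
      rw [LinearMap.comp_apply, hf, hg, LinearMap.id_apply])
  exact ⟨LinearEquiv.ofLinear f g hfg hgf, fun s m => hf s m⟩

end Abstract

end CP

section Chain

variable {A : Type} [Ring A] {ω ω' : Type} [AddCommGroup ω] [Module A ω]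
  [AddCommGroup ω'] [Module A ω']

lemma approxChain_congr :
    ∀ (n : ℕ) {M N : Type} [AddCommGroup M] [Module A M] [AddCommGroup N] [Module A N]
      (_ : M ≃ₗ[A] N), ApproxChain A ω n (ModuleCat.of A M) →
      ApproxChain A ω n (ModuleCat.of A N) := by
  intro n
  intro M N _ _ _ _ e h
  cases n with
  | zero => trivial
  | succ n =>
    obtain ⟨X, f, hX, hinj, happ, hch⟩ := h
    refine ⟨X, f.comp e.symm.toLinearMap, hX, ?_, ?_, ?_⟩
    · exact fun a b hab => by
        have := hinj hab
        exact e.symm.injective this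
    · intro Z _ _ hZ g
      obtain ⟨h0, hh0⟩ := happ Z hZ (g.comp e.toLinearMap)
      refine ⟨h0, LinearMap.ext fun x => ?_⟩
      have hthis := LinearMap.congr_fun hh0 (e.symm x)
      exact hthis.trans (congrArg g (e.apply_symm_apply x))
    · have hr : LinearMap.range (f.comp e.symm.toLinearMap) = LinearMap.range f := by
        rw [LinearMap.range_comp, LinearEquiv.range, Submodule.map_top]
      rw [hr]
      exact hch

lemma approxChain_omega_congr (e : ω ≃ₗ[A] ω') :
    ∀ (n : ℕ) (N : ModuleCat.{0} A), ApproxChain A ω n N → ApproxChain A ω' n N := by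
  intro n
  induction n with
  | zero => intro N _; trivial
  | succ n ih =>
    intro N h
    obtain ⟨X, f, hX, hinj, happ, hch⟩ := h
    refine ⟨X, f, memAdd_omega_congr e hX, hinj, ?_, ih _ hch⟩
    intro Z _ _ hZ g
    exact happ Z (memAdd_omega_congr e.symm hZ) g

end Chain

section Main

variable {R S : Type} [Ring R] [Ring S] {l : R →+* S} {k : ℕ} (d : CPData l k)
  {ω : Type} [AddCommGroup ω] [Module R ω]

lemma CPData.ind_chain :
    ∀ (n : ℕ) (M : Type) [AddCommGroup M] [Module R M],
      ApproxChain R ω n (ModuleCat.of R M) →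
      ApproxChain S (d.Ind ω) n (ModuleCat.of S (d.Ind M)) := by
  intro n
  induction n with
  | zero => intro M _ _ _; trivial
  | succ n ih =>
    intro M _ _ h
    obtain ⟨X, f, hX, hinj, happ, hch⟩ := h
    refine ⟨ModuleCat.of S (d.Ind X), d.indMap f, d.memAdd_ind hX, d.indMap_injective hinj,
      ?_, ?_⟩
    · -- left approximation
      intro Z _ _ hZ g
      let g0 : M →ₗ[R] Res l Z :=
        { toFun := fun m => Res.mk l (g (d.indT 1 m))
          map_add' := fun m m' => by
            show Res.mk l (g (d.indT 1 (m + m'))) = _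
            rw [map_add (d.indT 1), map_add g]
            rfl
          map_smul' := fun r m => by
            show Res.mk l (g (d.indT 1 (r • m))) = (l r • g (d.indT 1 m) : Z)
            rw [← d.indT_balanced, one_mul]
            have heq := d.indT_equivariant (l r) 1 m
            rw [mul_one] at heq
            rw [heq, map_smul]
            rfl }
      obtain ⟨h0, hh0⟩ := happ (Res l Z) (d.memAdd_res hZ) g0
      obtain ⟨h1, hh1, -⟩ := (d.indT_isInducedTensor (M := X)).2.2 Z
        (mkBiAdd (fun s x => s • (h0 x).out)
          (fun s s' x => by show (s + s') • (h0 x).out = _; rw [add_smul])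
          (fun s x x' => by
            show s • (h0 (x + x')).out = s • (h0 x).out + s • (h0 x').out
            rw [map_add, ← smul_add]
            rfl))
        (fun s r x => by
          show (s * l r) • (h0 x).out = s • (h0 (r • x)).out
          rw [map_smul]
          show (s * l r) • (h0 x).out = s • (l r • (h0 x).out)
          rw [mul_smul])
        (fun s' s x => by
          show (s' * s) • (h0 x).out = s' • (s • (h0 x).out)
          rw [mul_smul])
      refine ⟨h1, ?_⟩
      apply inducedTensor_ext (d.indT_isInducedTensor (M := M))
      intro s m
      show h1 (d.indMap f (d.indT s m)) = g (d.indT s m)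
      rw [d.indMap_indT, hh1]
      show s • (h0 (f m)).out = g (d.indT s m)
      have hcf := LinearMap.congr_fun hh0 m
      rw [LinearMap.comp_apply] at hcf
      rw [hcf]
      show s • g (d.indT 1 m) = g (d.indT s m)
      rw [← map_smul g]
      congr 1
      have heq := d.indT_equivariant s 1 m
      rw [mul_one] at heq
      rw [heq]
    · -- the quotient chain
      have hchS := ih (X ⧸ LinearMap.range f) hch
      set φ : d.Ind X →ₗ[S] d.Ind (X ⧸ LinearMap.range f) :=
        d.indMap (LinearMap.range f).mkQ with hφ
      have hsurj : Function.Surjective φ :=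
        d.indMap_surjective (Submodule.mkQ_surjective _)
      have hker : LinearMap.range (d.indMap f) = LinearMap.ker φ := by
        ext w
        constructor
        · rintro ⟨v, rfl⟩
          show φ (d.indMap f v) = 0
          apply Subtype.ext
          funext a
          show (LinearMap.range f).mkQ (f (v.1 a)) = 0
          rw [Submodule.mkQ_apply, Submodule.Quotient.mk_eq_zero]
          exact ⟨v.1 a, rfl⟩
        · intro hw
          have hw' : ∀ a, (LinearMap.range f).mkQ (w.1 a) = 0 := by
            intro a
            exact congrFun (congrArg Subtype.val hw) a
          have hmem : ∀ a, w.1 a ∈ LinearMap.range f := by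
            intro a
            have := hw' a
            rw [Submodule.mkQ_apply, Submodule.Quotient.mk_eq_zero] at this
            exact this
          choose m hm using hmem
          refine ⟨⟨m, ?_⟩, ?_⟩
          · intro a
            apply hinj
            rw [map_sum]
            calc ∑ b, f (d.C a b • m b) = ∑ b, d.C a b • w.1 b := by
                  refine Finset.sum_congr rfl fun b _ => ?_
                  rw [map_smul, hm]
              _ = w.1 a := w.2 a
              _ = f (m a) := (hm a).symm
          · apply Subtype.ext
            funext a
            exact hm a
      have e : d.Ind (X ⧸ LinearMap.range f) ≃ₗ[S]
          (d.Ind X ⧸ LinearMap.range (d.indMap f)) :=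
        ((Submodule.quotEquivOfEq _ _ hker).trans
          (φ.quotKerEquivOfSurjective hsurj)).symm
      have happly := approxChain_congr n e hchS
      exact happly

end Main

/-- Let `S/R` be a Frobenius extension with `_R S_R` centrally
projective over `R`, `ω` a finitely generated `R`-module with `fadim_R ω ≥ n + 2` and
`Ext^i_R(ω, ω) = 0` for `1 ≤ i ≤ n`.  If `M` is an `ω`-`n`-torsionfree finitely
generated `R`-module, then `S ⊗_R M` is `(S ⊗_R ω)`-`n`-torsionfree as an
`S`-module.  `(W, t)` and `(V, u)` realize `S ⊗_R ω` and `S ⊗_R M` respectively. -/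
theorem torsionfree_inducedTensor_of_torsionfree
    (R S : Type) [Ring R] [Ring S] [IsNoetherianRing R] [IsNoetherianRing Rᵐᵒᵖ]
    [IsNoetherianRing S] [IsNoetherianRing Sᵐᵒᵖ] (l : R →+* S)
    (hFrob : IsFrobeniusExtension l) (hCP : IsCentrallyProjective l)
    (ω : Type) [AddCommGroup ω] [Module R ω] [Module.Finite R ω] (n : ℕ)
    (hfadim : ApproxChain R ω (n + 2) (ModuleCat.of R R))
    (hself : ∀ i, 1 ≤ i → i ≤ n → ExtVanish R i ω ω)
    (M : Type) [AddCommGroup M] [Module R M] [Module.Finite R M]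
    (hM : ApproxChain R ω n (ModuleCat.of R M))
    (W : Type) [AddCommGroup W] [Module S W] (t : S →+ ω →+ W)
    (hW : IsInducedTensor l ω W t)
    (V : Type) [AddCommGroup V] [Module S V] (u : S →+ M →+ V)
    (hV : IsInducedTensor l M V u) :
    ApproxChain S W n (ModuleCat.of S V) := by
  obtain ⟨k, i, p, hi1, hi2, hp1, hp2, hpi⟩ := hCP
  set d : CPData l k := ⟨i, p, hi1, hi2, hp1, hp2, hpi⟩ with hd
  obtain ⟨eW, heW⟩ := inducedTensor_unique hW (d.indT_isInducedTensor (M := ω))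
  obtain ⟨eV, heV⟩ := inducedTensor_unique hV (d.indT_isInducedTensor (M := M))
  have h1 := d.ind_chain n M hM
  have h2 := approxChain_omega_congr eW.symm n _ h1
  exact approxChain_congr n eV.symm h2

end
end

section
/- Let S/R be a Frobenius extension of two-sided Noetherian rings and M a finitely generated S-module. Then Ext^i_R(M, ω) = 0 for all i ≥ 1 (for the underlying R-module) if and only if Ext^i_S(M, S ⊗_R ω) = 0 for all i ≥ 1. -/
open CategoryTheory

noncomputable section

/-!
Restriction of scalars along `l` is exact and left adjoint to coextension `Hom_R(S, -)`, which is
exact as well because a Frobenius system exhibits `_R S` as a direct summand of `Rⁿ`. Applying an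
exact adjunction termwise to a projective resolution of `M` identifies the two Hom complexes, so
`Ext^n_R(M, ω) ≅ Ext^n_S(M, Hom_R(S, ω))`. Finally the Frobenius system identifies
`S ⊗_R ω ≅ Hom_R(S, ω)` via `s ⊗ m ↦ (z ↦ E(z s) m)`, with inverse `g ↦ ∑ᵢ xᵢ ⊗ g(yᵢ)`.
-/

universe u v

open Limits

namespace CategoryTheory.Adjunction

variable {C D : Type*} [Category.{v} C] [Category.{v} D] [Abelian C] [Abelian D]
  {F : C ⥤ D} {G : D ⥤ C} (adj : F ⊣ G) [F.Additive]

def linearYonedaObjIso (P : ChainComplex C ℕ) (Y : D) :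
    ChainComplex.linearYonedaObj ((F.mapHomologicalComplex _).obj P) ℤ Y ≅
      ChainComplex.linearYonedaObj P ℤ (G.obj Y) :=
  HomologicalComplex.Hom.isoOfComponents
    (fun i => (adj.homAddEquiv (P.X i) Y).toIntLinearEquiv.toModuleIso)
    (fun i j _ => by
      ext g
      exact (adj.homEquiv_naturality_left (P.d j i) g).symm)

variable [EnoughProjectives C] [EnoughProjectives D]
  [F.PreservesHomology] [G.PreservesEpimorphisms]

def extIso (X : C) (Y : D) (n : ℕ) :
    ((Ext ℤ D n).obj (.op (F.obj X))).obj Y ≅ ((Ext ℤ C n).obj (.op X)).obj (G.obj Y) :=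
  have := Functor.preservesProjectiveObjects_of_adjunction_of_preservesEpimorphisms adj
  let P := projectiveResolution X
  (F.mapProjectiveResolution P).isoExt n Y ≪≫
    (HomologicalComplex.homologyFunctor _ _ n).mapIso (adj.linearYonedaObjIso P.complex Y) ≪≫
    (P.isoExt n (G.obj Y)).symm

end CategoryTheory.Adjunction

instance ModuleCat.restrictScalars_preservesFiniteLimits {R : Type*} {S : Type*} [Ring R]
    [Ring S] (l : R →+* S) : PreservesFiniteLimits (ModuleCat.restrictScalars.{v} l) where
  preservesFiniteLimits _ := ⟨fun {K} => ModuleCat.preservesLimit_restrictScalars l K⟩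

theorem ModuleCat.coextendScalars_preservesEpimorphisms {R S : Type u} [Ring R] [Ring S]
    (l : R →+* S)
    [Module.Projective R ((ModuleCat.restrictScalars.{u} l).obj (ModuleCat.of S S))] :
    (ModuleCat.coextendScalars.{u} l).PreservesEpimorphisms where
  preserves {A B} f hf := by
    rw [ModuleCat.epi_iff_surjective] at hf ⊢
    intro g
    obtain ⟨g', hg'⟩ := Module.projective_lifting_property f.hom g hf
    exact ⟨g', LinearMap.ext fun s => congrFun (congrArg DFunLike.coe hg') s⟩

namespace IsInducedTensor

variable {R S : Type} [Ring R] [Ring S] {l : R →+* S}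
  {M : Type} [AddCommGroup M] [Module R M] {W : Type} [AddCommGroup W] [Module S W]
  {t : S →+ M →+ W} {V : Type} [AddCommGroup V] [Module S V]

def lift (hW : IsInducedTensor l M W t) (b : S →+ M →+ V)
    (hb : ∀ s r m, b (s * l r) m = b s (r • m)) (hb' : ∀ s' s m, b (s' * s) m = s' • b s m) :
    W →ₗ[S] V :=
  (hW.2.2 V b hb hb').exists.choose

@[simp]
theorem lift_apply (hW : IsInducedTensor l M W t) (b : S →+ M →+ V)
    (hb : ∀ s r m, b (s * l r) m = b s (r • m)) (hb' : ∀ s' s m, b (s' * s) m = s' • b s m)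
    (s : S) (m : M) : hW.lift b hb hb' (t s m) = b s m :=
  (hW.2.2 V b hb hb').exists.choose_spec s m

theorem hom_ext (hW : IsInducedTensor l M W t) {f g : W →ₗ[S] V}
    (h : ∀ s m, f (t s m) = g (t s m)) : f = g := by
  let b : S →+ M →+ V := (f.toAddMonoidHom.compHom : (M →+ W) →+ M →+ V).comp t
  have hb : ∀ s r m, b (s * l r) m = b s (r • m) := fun s r m =>
    congrArg f (hW.1 s r m)
  have hb' : ∀ s' s m, b (s' * s) m = s' • b s m := fun s' s m =>
    (congrArg f (hW.2.1 s' s m)).trans (f.map_smul s' _)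
  exact (hW.2.2 V b hb hb').unique (fun _ _ => rfl) fun s m => (h s m).symm

end IsInducedTensor

structure FrobeniusSystem_s12 {R S : Type u} [Ring R] [Ring S] (l : R →+* S) where
  E : S →+ R
  n : ℕ
  x : Fin n → S
  y : Fin n → S
  E_mul_left : ∀ r s, E (l r * s) = r * E s
  E_mul_right : ∀ s r, E (s * l r) = E s * r
  sum_x_mul_E : ∀ s, ∑ i, x i * l (E (y i * s)) = s
  sum_E_mul_y : ∀ s, ∑ i, l (E (s * x i)) * y i = s

namespace FrobeniusSystem_s12

variable {R S : Type u} [Ring R] [Ring S] {l : R →+* S}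

theorem projective_restrictScalars (F : FrobeniusSystem_s12 l) :
    Module.Projective R ((ModuleCat.restrictScalars.{u} l).obj (ModuleCat.of S S)) := by
  refine Module.Projective.of_split (M := Fin F.n → R)
    { toFun (s : S) i := F.E (s * F.x i)
      map_add' (s s' : S) := by
        ext i
        exact (congrArg F.E (add_mul s s' _)).trans (map_add ..)
      map_smul' r (s : S) := by
        ext i
        exact (congrArg F.E (mul_assoc (l r) s _)).trans (F.E_mul_left ..) }
    { toFun g := (∑ i, l (g i) * F.y i : S)
      map_add' g g' := by
        show ∑ i, l (g i + g' i) * F.y i = (∑ i, l (g i) * F.y i) + ∑ i, l (g' i) * F.y i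
        simp only [map_add, add_mul, Finset.sum_add_distrib]
      map_smul' r g := by
        show ∑ i, l (r * g i) * F.y i = l r * ∑ i, l (g i) * F.y i
        simp only [map_mul, mul_assoc, Finset.mul_sum] } ?_
  ext (s : S)
  exact F.sum_E_mul_y s

variable (F : FrobeniusSystem_s12 l) {ω : Type u} [AddCommGroup ω] [Module R ω]

def rightMulE (s : S) : (ModuleCat.restrictScalars.{u} l).obj (ModuleCat.of S S) →ₗ[R] R where
  toFun (z : S) := F.E (z * s)
  map_add' (z z' : S) := (congrArg F.E (add_mul z z' s)).trans (map_add ..)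
  map_smul' r (z : S) := (congrArg F.E (mul_assoc (l r) z s)).trans (F.E_mul_left ..)

def coextPairing :
    S →+ ω →+ ((ModuleCat.restrictScalars.{u} l).obj (ModuleCat.of S S) →ₗ[R] ω) :=
  AddMonoidHom.mk'
    (fun s => AddMonoidHom.mk' (fun m => (F.rightMulE s).smulRight m)
      fun m m' => by ext; simp [smul_add])
    fun s s' => by
      ext m (z : S)
      show F.E (z * (s + s')) • m = F.E (z * s) • m + F.E (z * s') • m
      rw [mul_add, map_add, add_smul]

theorem coextPairing_apply (s : S) (m : ω) (z : S) :
    F.coextPairing s m z = F.E (z * s) • m := rfl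

theorem coextPairing_balanced (s : S) (r : R) (m : ω) :
    F.coextPairing (s * l r) m = F.coextPairing s (r • m) := by
  ext (z : S)
  rw [coextPairing_apply, coextPairing_apply, ← mul_assoc, F.E_mul_right, mul_smul]

theorem coextPairing_mul (s' s : S) (m : ω) :
    F.coextPairing (s' * s) m = s' • F.coextPairing s m := by
  ext (z : S)
  rw [coextPairing_apply, ModuleCat.CoextendScalars.smul_apply', coextPairing_apply, mul_assoc]

theorem sum_E_smul_apply (g : (ModuleCat.restrictScalars.{u} l).obj (ModuleCat.of S S) →ₗ[R] ω)
    (z : S) : ∑ i, F.E (z * F.x i) • g (F.y i) = g z := by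
  calc ∑ i, F.E (z * F.x i) • g (F.y i)
      = ∑ i, g (l (F.E (z * F.x i)) * F.y i) :=
        Finset.sum_congr rfl fun i _ => (g.map_smul _ (F.y i)).symm
    _ = g z := (map_sum g _ _).symm.trans (congrArg g (F.sum_E_mul_y z))

end FrobeniusSystem_s12

theorem IsFrobeniusExtension.nonempty_frobeniusSystem {R S : Type} [Ring R] [Ring S]
    {l : R →+* S} (h : IsFrobeniusExtension l) : Nonempty (FrobeniusSystem_s12 l) :=
  let ⟨E, n, x, y, h₁, h₂, h₃, h₄⟩ := h
  ⟨⟨E, n, x, y, h₁, h₂, h₃, h₄⟩⟩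

namespace FrobeniusSystem_s12

variable {R S : Type} [Ring R] [Ring S] {l : R →+* S} (F : FrobeniusSystem_s12 l)
  {ω : Type} [AddCommGroup ω] [Module R ω]
  {W : Type} [AddCommGroup W] [Module S W] {t : S →+ ω →+ W}

-- The Casimir element `∑ᵢ xᵢ ⊗ yᵢ ∈ S ⊗_R S` commutes with `S`, here paired against `g`.
theorem sum_tmul_mul_x (hW : IsInducedTensor l ω W t)
    (g : (ModuleCat.restrictScalars.{0} l).obj (ModuleCat.of S S) →ₗ[R] ω) (s : S) :
    ∑ i, t (s * F.x i) (g (F.y i)) = ∑ j, t (F.x j) (g (F.y j * s)) := by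
  have expand : ∀ i, t (s * F.x i) (g (F.y i)) =
      ∑ j, t (F.x j) (F.E (F.y j * s * F.x i) • g (F.y i)) := by
    intro i
    conv_lhs => rw [← F.sum_x_mul_E (s * F.x i)]
    simp only [map_sum, AddMonoidHom.finsetSum_apply, hW.1, mul_assoc]
  rw [Finset.sum_congr rfl fun i _ => expand i, Finset.sum_comm]
  refine Finset.sum_congr rfl fun j _ => ?_
  rw [← map_sum, ← F.sum_E_smul_apply g (F.y j * s)]

def fromCoext (hW : IsInducedTensor l ω W t) :
    ((ModuleCat.restrictScalars.{0} l).obj (ModuleCat.of S S) →ₗ[R] ω) →ₗ[S] W where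
  toFun g := ∑ i, t (F.x i) (g (F.y i))
  map_add' g g' := by
    show ∑ i, t (F.x i) (g (F.y i) + g' (F.y i)) = _
    simp only [map_add, Finset.sum_add_distrib]
  map_smul' s g := by
    rw [RingHom.id_apply, Finset.smul_sum]
    simp only [← hW.2.1]
    exact (F.sum_tmul_mul_x hW g s).symm

def toCoext (hW : IsInducedTensor l ω W t) :
    W →ₗ[S] ((ModuleCat.restrictScalars.{0} l).obj (ModuleCat.of S S) →ₗ[R] ω) :=
  hW.lift F.coextPairing F.coextPairing_balanced F.coextPairing_mul

theorem toCoext_tmul (hW : IsInducedTensor l ω W t) (s : S) (m : ω) (z : S) :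
    F.toCoext hW (t s m) z = F.E (z * s) • m := by
  rw [toCoext, hW.lift_apply, coextPairing_apply]

def inducedEquivCoext (hW : IsInducedTensor l ω W t) :
    W ≃ₗ[S] ((ModuleCat.restrictScalars.{0} l).obj (ModuleCat.of S S) →ₗ[R] ω) :=
  .ofLinearMap (F.toCoext hW) (F.fromCoext hW)
    (by
      ext g (z : S)
      show F.toCoext hW (∑ i, t (F.x i) (g (F.y i))) z = g z
      rw [map_sum]
      refine (LinearMap.sum_apply _ _ _).trans ?_
      simp only [F.toCoext_tmul]
      exact F.sum_E_smul_apply g z)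
    (hW.hom_ext fun s m => by
      show ∑ i, t (F.x i) (F.toCoext hW (t s m) (F.y i)) = t s m
      simp only [F.toCoext_tmul, ← hW.1, ← AddMonoidHom.finsetSum_apply, ← map_sum]
      rw [F.sum_x_mul_E])

def extIsoInduced (hW : IsInducedTensor l ω W t) (X : ModuleCat.{0} S) (n : ℕ) :
    ((Ext ℤ (ModuleCat.{0} R) n).obj (.op ((ModuleCat.restrictScalars l).obj X))).obj
        (ModuleCat.of R ω) ≅
      ((Ext ℤ (ModuleCat.{0} S) n).obj (.op X)).obj (ModuleCat.of S W) :=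
  have := F.projective_restrictScalars
  have := ModuleCat.coextendScalars_preservesEpimorphisms l
  (ModuleCat.restrictCoextendScalarsAdj l).extIso X _ n ≪≫
    ((Ext ℤ _ n).obj _).mapIso (F.inducedEquivCoext hW).toModuleIso.symm

end FrobeniusSystem_s12

theorem extVanish_restrict_iff_extVanish_inducedTensor_general
    (R S : Type) [Ring R] [Ring S] (l : R →+* S)
    (hFrob : IsFrobeniusExtension l)
    (ω : Type) [AddCommGroup ω] [Module R ω]
    (W : Type) [AddCommGroup W] [Module S W] (t : S →+ ω →+ W)
    (hW : IsInducedTensor l ω W t)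
    (M : Type) [AddCommGroup M] [Module S M] :
    letI : Module R M := Module.compHom M l
    ((∀ i, 1 ≤ i → ExtVanish R i M ω) ↔ (∀ i, 1 ≤ i → ExtVanish S i M W)) := by
  obtain ⟨F⟩ := hFrob.nonempty_frobeniusSystem
  refine forall₂_congr fun i _ => ?_
  exact (F.extIsoInduced hW (ModuleCat.of S M) i).toLinearEquiv.toEquiv.subsingleton_congr

/-- Let `S/R` be a Frobenius extension of two-sided Noetherian
rings and `M` a finitely generated `S`-module.  Then `Ext^i_R(M, ω) = 0` for all
`i ≥ 1` (for the underlying `R`-module) iff `Ext^i_S(M, S ⊗_R ω) = 0` for all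
`i ≥ 1`, where `(W, t)` realizes `S ⊗_R ω`. -/
theorem extVanish_restrict_iff_extVanish_inducedTensor
    (R S : Type) [Ring R] [Ring S] [IsNoetherianRing R] [IsNoetherianRing Rᵐᵒᵖ]
    [IsNoetherianRing S] [IsNoetherianRing Sᵐᵒᵖ] (l : R →+* S)
    (hFrob : IsFrobeniusExtension l)
    (ω : Type) [AddCommGroup ω] [Module R ω] [Module.Finite R ω]
    (W : Type) [AddCommGroup W] [Module S W] (t : S →+ ω →+ W)
    (hW : IsInducedTensor l ω W t)
    (M : Type) [AddCommGroup M] [Module S M] [Module.Finite S M] :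
    letI : Module R M := Module.compHom M l
    ((∀ i, 1 ≤ i → ExtVanish R i M ω) ↔ (∀ i, 1 ≤ i → ExtVanish S i M W)) :=
  extVanish_restrict_iff_extVanish_inducedTensor_general R S l hFrob ω W t hW M
end
end
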